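/- arXiv:2412.13362 — 8 statements merged into one kernel-verified Lean document; each statement's English description precedes it below -/
import Mathlib

section
/- Under the minimizing copula construction, the expected product satisfies E[f₁(U)·f₂(U₂)·f₃(U₃ᵐ)] = −∫₀¹ |f₁(u)f₂(u)f₃(u)| du; i.e., the coskewness of the random vector (f₁(U), f₂(U₂), f₃(U₃ᵐ)) equals the minimal value −E[|f₁(U)f₂(U)f₃(U)|]. -/
open MeasureTheory ProbabilityTheory

/-- Indicator of the event `x > 1/2`. -/
noncomputable def ind (x : ℝ) : ℝ := if x > 1/2 then 1 else 0

/-- `U₂ = IJU + I(1−J)(1−U) + (1−I)JU + (1−I)(1−J)(1−U)`. -/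
noncomputable def u2 (u v : ℝ) : ℝ :=
  ind u * ind v * u + ind u * (1 - ind v) * (1 - u)
    + (1 - ind u) * ind v * u + (1 - ind u) * (1 - ind v) * (1 - u)

/-- `U₃ᵐ = IJ(1−U) + I(1−J)U + (1−I)JU + (1−I)(1−J)(1−U)`. -/
noncomputable def u3m (u v : ℝ) : ℝ :=
  ind u * ind v * (1 - u) + ind u * (1 - ind v) * u
    + (1 - ind u) * ind v * u + (1 - ind u) * (1 - ind v) * (1 - u)

/-- under the minimizing copula construction,
`E[f₁(U)·f₂(U₂)·f₃(U₃ᵐ)] = −∫₀¹ |f₁(u)f₂(u)f₃(u)| du`. -/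
theorem stmt2 {Ω : Type} [MeasurableSpace Ω] (P : Measure Ω) [IsProbabilityMeasure P]
    (U V : Ω → ℝ)
    (hU : Measurable U) (hV : Measurable V)
    (hUunif : P.map U = volume.restrict (Set.Icc (0:ℝ) 1))
    (hVunif : P.map V = volume.restrict (Set.Icc (0:ℝ) 1))
    (hUV : IndepFun U V P)
    (f₁ f₂ f₃ : ℝ → ℝ)
    (hf₁ : Measurable f₁) (hf₂ : Measurable f₂) (hf₃ : Measurable f₃)
    (hf₁mono : MonotoneOn f₁ (Set.Ioo 0 1)) (hf₂mono : MonotoneOn f₂ (Set.Ioo 0 1))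
    (hf₃mono : MonotoneOn f₃ (Set.Ioo 0 1))
    (hf₁sym : ∀ u ∈ Set.Ioo (0:ℝ) 1, f₁ (1 - u) = - f₁ u)
    (hf₂sym : ∀ u ∈ Set.Ioo (0:ℝ) 1, f₂ (1 - u) = - f₂ u)
    (hf₃sym : ∀ u ∈ Set.Ioo (0:ℝ) 1, f₃ (1 - u) = - f₃ u)
    (hf₁int : IntegrableOn (fun u => |f₁ u| ^ 3) (Set.Ioo (0:ℝ) 1) volume)
    (hf₂int : IntegrableOn (fun u => |f₂ u| ^ 3) (Set.Ioo (0:ℝ) 1) volume)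
    (hf₃int : IntegrableOn (fun u => |f₃ u| ^ 3) (Set.Ioo (0:ℝ) 1) volume) :
    ∫ ω, f₁ (U ω) * f₂ (u2 (U ω) (V ω)) * f₃ (u3m (U ω) (V ω)) ∂P
      = - ∫ u in Set.Ioo (0:ℝ) 1, |f₁ u * f₂ u * f₃ u| := by

  classical
  -- sign lemma
  have sign : ∀ (f : ℝ → ℝ), MonotoneOn f (Set.Ioo 0 1) →
      (∀ u ∈ Set.Ioo (0:ℝ) 1, f (1 - u) = - f u) →
      ∀ u ∈ Set.Ioo (0:ℝ) 1, (u ≤ 1/2 → f u ≤ 0) ∧ (1/2 ≤ u → 0 ≤ f u) := by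
    intro f hmono hsym u hu
    have h1u : (1 - u) ∈ Set.Ioo (0:ℝ) 1 := ⟨by linarith [hu.2], by linarith [hu.1]⟩
    constructor
    · intro h
      have : f u ≤ f (1 - u) := hmono hu h1u (by linarith)
      rw [hsym u hu] at this; linarith
    · intro h
      have : f (1 - u) ≤ f u := hmono h1u hu (by linarith)
      rw [hsym u hu] at this; linarith
  set F : ℝ → ℝ := fun u => -|f₁ u * f₂ u * f₃ u| with hF
  have key : ∀ u ∈ Set.Ioo (0:ℝ) 1, ∀ v : ℝ,
      f₁ u * f₂ (u2 u v) * f₃ (u3m u v) = F u := by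
    intro u hu v
    have s1 := sign f₁ hf₁mono hf₁sym u hu
    have s2 := sign f₂ hf₂mono hf₂sym u hu
    have s3 := sign f₃ hf₃mono hf₃sym u hu
    by_cases hu2 : u > 1/2 <;> by_cases hv2 : v > 1/2 <;>
      simp only [u2, u3m, ind, if_pos, if_neg, hu2, hv2, if_true, if_false,
        sub_self, sub_zero, mul_one, mul_zero, zero_mul, one_mul, zero_add,
        add_zero, hF]
    · rw [hf₃sym u hu, abs_of_nonneg (mul_nonneg (mul_nonneg (s1.2 hu2.le)
        (s2.2 hu2.le)) (s3.2 hu2.le))]; ring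
    · rw [hf₂sym u hu, abs_of_nonneg (mul_nonneg (mul_nonneg (s1.2 hu2.le)
        (s2.2 hu2.le)) (s3.2 hu2.le))]; ring
    · push_neg at hu2
      rw [abs_of_nonpos (by
        have h12 : 0 ≤ f₁ u * f₂ u := by nlinarith [s1.1 hu2, s2.1 hu2]
        exact mul_nonpos_iff.mpr (Or.inl ⟨h12, s3.1 hu2⟩) :
        f₁ u * f₂ u * f₃ u ≤ 0)]; ring
    · push_neg at hu2
      rw [hf₂sym u hu, hf₃sym u hu, abs_of_nonpos (by
        have h12 : 0 ≤ f₁ u * f₂ u := by nlinarith [s1.1 hu2, s2.1 hu2]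
        exact mul_nonpos_iff.mpr (Or.inl ⟨h12, s3.1 hu2⟩) :
        f₁ u * f₂ u * f₃ u ≤ 0)]; ring
  have hae : ∀ᵐ ω ∂P, U ω ∈ Set.Ioo (0:ℝ) 1 := by
    have hmeas : MeasurableSet ((Set.Ioo (0:ℝ) 1)ᶜ) := measurableSet_Ioo.compl
    have h0 : P (U ⁻¹' (Set.Ioo (0:ℝ) 1)ᶜ) = 0 := by
      have : (P.map U) ((Set.Ioo (0:ℝ) 1)ᶜ) = P (U ⁻¹' (Set.Ioo (0:ℝ) 1)ᶜ) :=
        Measure.map_apply hU hmeas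
      rw [hUunif] at this
      rw [← this, Measure.restrict_apply hmeas]
      have hsub : (Set.Ioo (0:ℝ) 1)ᶜ ∩ Set.Icc 0 1 ⊆ ({0, 1} : Set ℝ) := by
        intro x ⟨hx1, hx2⟩
        simp only [Set.mem_compl_iff, Set.mem_Ioo, not_and_or, not_lt] at hx1
        simp only [Set.mem_insert_iff, Set.mem_singleton_iff]
        rcases hx1 with h | h
        · left; linarith [hx2.1]
        · right; linarith [hx2.2]
      exact measure_mono_null hsub (Set.Finite.measure_zero (Set.toFinite _) _)
    filter_upwards [measure_eq_zero_iff_ae_notMem.mp h0] with ω hω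
    simpa using hω
  have hFmeas : Measurable F := ((hf₁.mul hf₂).mul hf₃).abs.neg
  calc ∫ ω, f₁ (U ω) * f₂ (u2 (U ω) (V ω)) * f₃ (u3m (U ω) (V ω)) ∂P
      = ∫ ω, F (U ω) ∂P := by
        refine integral_congr_ae ?_
        filter_upwards [hae] with ω hω
        exact key _ hω _
    _ = ∫ u, F u ∂(P.map U) :=
        (integral_map hU.aemeasurable hFmeas.aestronglyMeasurable).symm
    _ = ∫ u in Set.Icc (0:ℝ) 1, F u := by rw [hUunif]
    _ = ∫ u in Set.Ioo (0:ℝ) 1, F u :=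
        (setIntegral_congr_set Ioo_ae_eq_Icc).symm
    _ = - ∫ u in Set.Ioo (0:ℝ) 1, |f₁ u * f₂ u * f₃ u| := by
        rw [← integral_neg]
end

section
/- For every λ ∈ [0,1], the coskewness under the mixture copula C^λ is the convex combination of the extreme coskewnesses: E[f₁(U)·f₂(U₂)·f₃(U₃^λ)] = λ·E[f₁(U)f₂(U₂)f₃(U₃ᴹ)] + (1−λ)·E[f₁(U)f₂(U₂)f₃(U₃ᵐ)] = (2λ−1)·∫₀¹ |f₁(u)f₂(u)f₃(u)| du. In particular, as λ ranges over [0,1] the coskewness attains every value between the minimum −∫₀¹|f₁f₂f₃| and the maximum ∫₀¹|f₁f₂f₃|. -/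
/-!
Monotonicity and oddness about `1/2` give every `fᵢ` the sign of `u - 1/2`, and oddness turns
the reflection `u ↦ 1 - u` into a change of sign. Hence, pointwise, `f₁(U) f₂(U₂) f₃(U₃ᴹ)` is
`|f₁ f₂ f₃|(U)` and `f₁(U) f₂(U₂) f₃(U₃ᵐ)` is its negative, so the mixture integrand is
`(2B - 1) |f₁ f₂ f₃|(U)`. Independence of `B` and `U` factors its expectation into
`(2λ - 1) ∫₀¹ |f₁ f₂ f₃|`.
-/

open MeasureTheory ProbabilityTheory

/-- `U₃ᴹ = IJU + I(1−J)(1−U) + (1−I)J(1−U) + (1−I)(1−J)U`. -/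
noncomputable def u3M (u v : ℝ) : ℝ :=
  ind u * ind v * u + ind u * (1 - ind v) * (1 - u)
    + (1 - ind u) * ind v * (1 - u) + (1 - ind u) * (1 - ind v) * u

open Set

lemma u2_eq_ite (u v : ℝ) : u2 u v = if 1/2 < v then u else 1 - u := by
  unfold u2 ind; split_ifs <;> ring

lemma u3M_eq_ite (u v : ℝ) : u3M u v = if (1/2 < u ↔ 1/2 < v) then u else 1 - u := by
  unfold u3M ind; split_ifs <;> first | ring1 | tauto

lemma u3m_eq_one_sub_u3M (u v : ℝ) : u3m u v = 1 - u3M u v := by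
  unfold u3m u3M; ring

lemma u3M_mem_Ioo {u : ℝ} (hu : u ∈ Ioo (0:ℝ) 1) (v : ℝ) : u3M u v ∈ Ioo (0:ℝ) 1 := by
  rw [u3M_eq_ite]
  split_ifs
  · exact hu
  · exact ⟨by linarith [hu.2], by linarith [hu.1]⟩

def MonotoneOddAboutHalf (f : ℝ → ℝ) : Prop :=
  MonotoneOn f (Ioo 0 1) ∧ ∀ u ∈ Ioo (0:ℝ) 1, f (1 - u) = -f u

namespace MonotoneOddAboutHalf

variable {f : ℝ → ℝ} {u : ℝ}

lemma nonneg_of_half_le (hf : MonotoneOddAboutHalf f) (hu : u ∈ Ioo (0:ℝ) 1) (h : 1/2 ≤ u) :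
    0 ≤ f u := by
  have h1u : 1 - u ∈ Ioo (0:ℝ) 1 := ⟨by linarith [hu.2], by linarith [hu.1]⟩
  linarith [hf.1 h1u hu (by linarith), hf.2 u hu]

lemma nonpos_of_le_half (hf : MonotoneOddAboutHalf f) (hu : u ∈ Ioo (0:ℝ) 1) (h : u ≤ 1/2) :
    f u ≤ 0 := by
  have h1u : 1 - u ∈ Ioo (0:ℝ) 1 := ⟨by linarith [hu.2], by linarith [hu.1]⟩
  have := hf.nonneg_of_half_le h1u (by linarith)
  linarith [hf.2 u hu]

end MonotoneOddAboutHalf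

section Coskewness

variable {f₁ f₂ f₃ : ℝ → ℝ} {u : ℝ}

/-- For `u > 1/2`, `u3M` reflects `u` exactly when `u2` does, so the two sign changes cancel; for
`u ≤ 1/2` exactly one of them reflects, and that sign change cancels the sign of `f₁ f₂ f₃ ≤ 0`. -/
lemma mul_u2_u3M_eq_abs (h₁ : MonotoneOddAboutHalf f₁) (h₂ : MonotoneOddAboutHalf f₂)
    (h₃ : MonotoneOddAboutHalf f₃) (hu : u ∈ Ioo (0:ℝ) 1) (v : ℝ) :
    f₁ u * f₂ (u2 u v) * f₃ (u3M u v) = |f₁ u * f₂ u * f₃ u| := by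
  rw [u2_eq_ite, u3M_eq_ite]
  rcases le_or_gt u (1/2) with hu' | hu'
  · have hprod : f₁ u * f₂ u * f₃ u ≤ 0 :=
      mul_nonpos_of_nonneg_of_nonpos
        (mul_nonneg_of_nonpos_of_nonpos (h₁.nonpos_of_le_half hu hu') (h₂.nonpos_of_le_half hu hu'))
        (h₃.nonpos_of_le_half hu hu')
    rw [abs_of_nonpos hprod]
    by_cases hv : 1/2 < v
    · simp only [hv, hu'.not_gt, if_true, false_iff, not_true_eq_false, if_false, h₃.2 u hu]; ring
    · simp only [hv, hu'.not_gt, if_false, iff_self, if_true, h₂.2 u hu]; ring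
  · have hprod : 0 ≤ f₁ u * f₂ u * f₃ u :=
      mul_nonneg (mul_nonneg (h₁.nonneg_of_half_le hu hu'.le) (h₂.nonneg_of_half_le hu hu'.le))
        (h₃.nonneg_of_half_le hu hu'.le)
    rw [abs_of_nonneg hprod]
    by_cases hv : 1/2 < v
    · simp only [hv, hu', if_true, iff_self]
    · simp only [hv, hu', if_false, true_iff, if_false, h₂.2 u hu, h₃.2 u hu]; ring

lemma mul_u2_u3m_eq_neg_abs (h₁ : MonotoneOddAboutHalf f₁) (h₂ : MonotoneOddAboutHalf f₂)
    (h₃ : MonotoneOddAboutHalf f₃) (hu : u ∈ Ioo (0:ℝ) 1) (v : ℝ) :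
    f₁ u * f₂ (u2 u v) * f₃ (u3m u v) = -|f₁ u * f₂ u * f₃ u| := by
  rw [u3m_eq_one_sub_u3M, h₃.2 _ (u3M_mem_Ioo hu v), ← mul_u2_u3M_eq_abs h₁ h₂ h₃ hu v]
  ring

lemma mul_u2_mix_eq (h₁ : MonotoneOddAboutHalf f₁) (h₂ : MonotoneOddAboutHalf f₂)
    (h₃ : MonotoneOddAboutHalf f₃) (hu : u ∈ Ioo (0:ℝ) 1) (v : ℝ) {b : ℝ} (hb : b = 0 ∨ b = 1) :
    f₁ u * f₂ (u2 u v) * f₃ (b * u3M u v + (1 - b) * u3m u v)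
      = (2 * b - 1) * |f₁ u * f₂ u * f₃ u| := by
  rcases hb with rfl | rfl
  · simp only [zero_mul, sub_zero, one_mul, zero_add, mul_u2_u3m_eq_neg_abs h₁ h₂ h₃ hu v]; ring
  · simp only [one_mul, sub_self, zero_mul, add_zero, mul_u2_u3M_eq_abs h₁ h₂ h₃ hu v]; ring

end Coskewness

section Probability

variable {Ω : Type*} [MeasurableSpace Ω] {P : Measure Ω} {U B : Ω → ℝ}

lemma map_eq_restrict_Ioo_of_map_eq_restrict_Icc (hUunif : P.map U = volume.restrict (Icc 0 1)) :
    P.map U = volume.restrict (Ioo 0 1) := by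
  rw [hUunif, Measure.restrict_congr_set Ioo_ae_eq_Icc]

lemma ae_mem_Ioo_of_map_eq_restrict_Icc (hU : Measurable U)
    (hUunif : P.map U = volume.restrict (Icc 0 1)) :
    ∀ᵐ ω ∂P, U ω ∈ Ioo (0:ℝ) 1 :=
  ae_of_ae_map hU.aemeasurable
    (map_eq_restrict_Ioo_of_map_eq_restrict_Icc hUunif ▸ ae_restrict_mem measurableSet_Ioo)

lemma integral_comp_eq_setIntegral_Ioo_of_map_eq_restrict_Icc (hU : Measurable U)
    (hUunif : P.map U = volume.restrict (Icc 0 1)) {g : ℝ → ℝ} (hg : Measurable g) :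
    ∫ ω, g (U ω) ∂P = ∫ u in Ioo 0 1, g u := by
  rw [← integral_map hU.aemeasurable hg.aestronglyMeasurable,
    map_eq_restrict_Ioo_of_map_eq_restrict_Icc hUunif]

lemma integral_eq_measureReal_of_zero_or_one (hB : Measurable B)
    (hB01 : ∀ ω, B ω = 0 ∨ B ω = 1) :
    ∫ ω, B ω ∂P = P.real {ω | B ω = 1} := by
  have hS : MeasurableSet {ω | B ω = 1} := hB (measurableSet_singleton 1)
  rw [← integral_indicator_one hS]
  congr 1
  funext ω
  rcases hB01 ω with h | h <;> simp [h]

lemma integral_two_mul_sub_one_of_zero_or_one [IsProbabilityMeasure P] (hB : Measurable B)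
    (hB01 : ∀ ω, B ω = 0 ∨ B ω = 1) {p : ℝ} (hBp : P {ω | B ω = 1} = ENNReal.ofReal p)
    (hp : 0 ≤ p) :
    ∫ ω, (2 * B ω - 1) ∂P = 2 * p - 1 := by
  have hBint : Integrable B P := .of_mem_Icc 0 1 hB.aemeasurable
    (.of_forall fun ω => by rcases hB01 ω with h | h <;> simp [h])
  rw [integral_sub (hBint.const_mul 2) (integrable_const 1), integral_const_mul,
    integral_eq_measureReal_of_zero_or_one hB hB01, measureReal_def, hBp,
    ENNReal.toReal_ofReal hp, integral_const, probReal_univ, one_smul]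

end Probability

theorem stmt3_general {Ω : Type} [MeasurableSpace Ω] (P : Measure Ω) [IsProbabilityMeasure P]
    (U V B : Ω → ℝ) (lam : ℝ) (hlam : lam ∈ Set.Icc (0:ℝ) 1)
    (hU : Measurable U) (hB : Measurable B)
    (hUunif : P.map U = volume.restrict (Set.Icc (0:ℝ) 1))
    (hB01 : ∀ ω, B ω = 0 ∨ B ω = 1)
    (hBlam : P {ω | B ω = 1} = ENNReal.ofReal lam)
    (hBind : IndepFun (fun ω => (U ω, V ω)) B P)
    (f₁ f₂ f₃ : ℝ → ℝ)
    (hf₁ : Measurable f₁) (hf₂ : Measurable f₂) (hf₃ : Measurable f₃)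
    (hf₁mono : MonotoneOn f₁ (Set.Ioo 0 1)) (hf₂mono : MonotoneOn f₂ (Set.Ioo 0 1))
    (hf₃mono : MonotoneOn f₃ (Set.Ioo 0 1))
    (hf₁sym : ∀ u ∈ Set.Ioo (0:ℝ) 1, f₁ (1 - u) = - f₁ u)
    (hf₂sym : ∀ u ∈ Set.Ioo (0:ℝ) 1, f₂ (1 - u) = - f₂ u)
    (hf₃sym : ∀ u ∈ Set.Ioo (0:ℝ) 1, f₃ (1 - u) = - f₃ u) :
    (∫ ω, f₁ (U ω) * f₂ (u2 (U ω) (V ω))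
        * f₃ (B ω * u3M (U ω) (V ω) + (1 - B ω) * u3m (U ω) (V ω)) ∂P
      = lam * ∫ ω, f₁ (U ω) * f₂ (u2 (U ω) (V ω)) * f₃ (u3M (U ω) (V ω)) ∂P
        + (1 - lam) * ∫ ω, f₁ (U ω) * f₂ (u2 (U ω) (V ω)) * f₃ (u3m (U ω) (V ω)) ∂P) ∧
    (∫ ω, f₁ (U ω) * f₂ (u2 (U ω) (V ω))
        * f₃ (B ω * u3M (U ω) (V ω) + (1 - B ω) * u3m (U ω) (V ω)) ∂P
      = (2 * lam - 1) * ∫ u in Set.Ioo (0:ℝ) 1, |f₁ u * f₂ u * f₃ u|) := by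
  have h₁ : MonotoneOddAboutHalf f₁ := ⟨hf₁mono, hf₁sym⟩
  have h₂ : MonotoneOddAboutHalf f₂ := ⟨hf₂mono, hf₂sym⟩
  have h₃ : MonotoneOddAboutHalf f₃ := ⟨hf₃mono, hf₃sym⟩
  set g : ℝ → ℝ := fun u => |f₁ u * f₂ u * f₃ u|
  have hg : Measurable g := ((hf₁.mul hf₂).mul hf₃).abs
  have hUmem := ae_mem_Ioo_of_map_eq_restrict_Icc hU hUunif
  have hEg := integral_comp_eq_setIntegral_Ioo_of_map_eq_restrict_Icc hU hUunif hg
  have hindep : IndepFun (fun ω => 2 * B ω - 1) (fun ω => g (U ω)) P :=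
    hBind.symm.comp (measurable_id.const_mul 2 |>.sub_const 1) (hg.comp measurable_fst)
  have hmix : ∫ ω, f₁ (U ω) * f₂ (u2 (U ω) (V ω))
      * f₃ (B ω * u3M (U ω) (V ω) + (1 - B ω) * u3m (U ω) (V ω)) ∂P
      = (2 * lam - 1) * ∫ u in Ioo 0 1, g u := by
    rw [integral_congr_ae (hUmem.mono fun ω hω => mul_u2_mix_eq h₁ h₂ h₃ hω (V ω) (hB01 ω)),
      hindep.integral_fun_mul_eq_mul_integral
        (hB.const_mul 2 |>.sub_const 1).aestronglyMeasurable (hg.comp hU).aestronglyMeasurable,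
      integral_two_mul_sub_one_of_zero_or_one hB hB01 hBlam hlam.1, hEg]
  have hM : ∫ ω, f₁ (U ω) * f₂ (u2 (U ω) (V ω)) * f₃ (u3M (U ω) (V ω)) ∂P
      = ∫ u in Ioo 0 1, g u :=
    hEg ▸ integral_congr_ae (hUmem.mono fun ω hω => mul_u2_u3M_eq_abs h₁ h₂ h₃ hω (V ω))
  have hm : ∫ ω, f₁ (U ω) * f₂ (u2 (U ω) (V ω)) * f₃ (u3m (U ω) (V ω)) ∂P
      = -∫ u in Ioo 0 1, g u := by
    rw [← hEg, ← integral_neg]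
    exact integral_congr_ae (hUmem.mono fun ω hω => mul_u2_u3m_eq_neg_abs h₁ h₂ h₃ hω (V ω))
  refine ⟨?_, hmix⟩
  rw [hmix, hM, hm]
  ring

/-- the coskewness under the mixture copula `C^λ` is the convex combination
`λ·S̄ + (1−λ)·S̲ = (2λ−1)·∫₀¹ |f₁ f₂ f₃|` of the extreme coskewnesses. -/
theorem stmt3 {Ω : Type} [MeasurableSpace Ω] (P : Measure Ω) [IsProbabilityMeasure P]
    (U V B : Ω → ℝ) (lam : ℝ) (hlam : lam ∈ Set.Icc (0:ℝ) 1)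
    (hU : Measurable U) (hV : Measurable V) (hB : Measurable B)
    (hUunif : P.map U = volume.restrict (Set.Icc (0:ℝ) 1))
    (hVunif : P.map V = volume.restrict (Set.Icc (0:ℝ) 1))
    (hUV : IndepFun U V P)
    (hB01 : ∀ ω, B ω = 0 ∨ B ω = 1)
    (hBlam : P {ω | B ω = 1} = ENNReal.ofReal lam)
    (hBind : IndepFun (fun ω => (U ω, V ω)) B P)
    (f₁ f₂ f₃ : ℝ → ℝ)
    (hf₁ : Measurable f₁) (hf₂ : Measurable f₂) (hf₃ : Measurable f₃)
    (hf₁mono : MonotoneOn f₁ (Set.Ioo 0 1)) (hf₂mono : MonotoneOn f₂ (Set.Ioo 0 1))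
    (hf₃mono : MonotoneOn f₃ (Set.Ioo 0 1))
    (hf₁sym : ∀ u ∈ Set.Ioo (0:ℝ) 1, f₁ (1 - u) = - f₁ u)
    (hf₂sym : ∀ u ∈ Set.Ioo (0:ℝ) 1, f₂ (1 - u) = - f₂ u)
    (hf₃sym : ∀ u ∈ Set.Ioo (0:ℝ) 1, f₃ (1 - u) = - f₃ u)
    (hf₁int : IntegrableOn (fun u => |f₁ u| ^ 3) (Set.Ioo (0:ℝ) 1) volume)
    (hf₂int : IntegrableOn (fun u => |f₂ u| ^ 3) (Set.Ioo (0:ℝ) 1) volume)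
    (hf₃int : IntegrableOn (fun u => |f₃ u| ^ 3) (Set.Ioo (0:ℝ) 1) volume) :
    (∫ ω, f₁ (U ω) * f₂ (u2 (U ω) (V ω))
        * f₃ (B ω * u3M (U ω) (V ω) + (1 - B ω) * u3m (U ω) (V ω)) ∂P
      = lam * ∫ ω, f₁ (U ω) * f₂ (u2 (U ω) (V ω)) * f₃ (u3M (U ω) (V ω)) ∂P
        + (1 - lam) * ∫ ω, f₁ (U ω) * f₂ (u2 (U ω) (V ω)) * f₃ (u3m (U ω) (V ω)) ∂P) ∧
    (∫ ω, f₁ (U ω) * f₂ (u2 (U ω) (V ω))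
        * f₃ (B ω * u3M (U ω) (V ω) + (1 - B ω) * u3m (U ω) (V ω)) ∂P
      = (2 * lam - 1) * ∫ u in Set.Ioo (0:ℝ) 1, |f₁ u * f₂ u * f₃ u|) :=
  stmt3_general P U V B lam hlam hU hB hUunif hB01 hBlam hBind f₁ f₂ f₃ hf₁ hf₂ hf₃ hf₁mono hf₂mono
    hf₃mono hf₁sym hf₂sym hf₃sym
end

section
/- Under the mixture copula C^λ, all three pairwise correlations vanish: E[f₁(U)·f₂(U₂)] = 0, E[f₁(U)·f₃(U₃^λ)] = 0, and E[f₂(U₂)·f₃(U₃^λ)] = 0; moreover E[f_i] = 0 for each i, so the random variables f₁(U), f₂(U₂), f₃(U₃^λ) are pairwise uncorrelated for every λ ∈ [0,1]. -/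
open MeasureTheory ProbabilityTheory

/-!
Both reflections `U ↦ 1 - U` and `V ↦ 1 - V` preserve the joint law of `((U, V), B)`: each
reflection preserves the uniform law on `[0, 1]`, and the law of `((U, V), B)` is built from the
laws of `U`, `V`, `B` by independence. Off the null events `U = 1/2`, `V = 1/2`, reflecting `V`
fixes `U` and sends `U₂`, `U₃^λ` to `1 - U₂`, `1 - U₃^λ`, while reflecting `U` sends `U` and `U₂`
to `1 - U` and `1 - U₂` and fixes `U₃^λ`. As each `fᵢ` is odd about `1/2`, every one of the six
integrands changes sign under one of the two reflections, so its integral vanishes.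
-/

open Set

/-- `U₃^λ` on the event `B = b`. -/
noncomputable def u3lam (b u v : ℝ) : ℝ := b * u3M u v + (1 - b) * u3m u v

@[fun_prop]
lemma measurable_ind : Measurable ind :=
  Measurable.ite measurableSet_Ioi measurable_const measurable_const

@[fun_prop]
lemma measurable_u2 : Measurable (fun p : ℝ × ℝ => u2 p.1 p.2) := by
  unfold u2; fun_prop

@[fun_prop]
lemma measurable_u3lam : Measurable (fun p : (ℝ × ℝ) × ℝ => u3lam p.2 p.1.1 p.1.2) := by
  unfold u3lam u3M u3m; fun_prop

lemma ind_one_sub {x : ℝ} (hx : x ≠ 1 / 2) : ind (1 - x) = 1 - ind x := by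
  unfold ind
  split_ifs
  · linarith
  · norm_num
  · norm_num
  · exact absurd (by linarith) hx

lemma u2_one_sub_left (u v : ℝ) : u2 (1 - u) v = 1 - u2 u v := by
  unfold u2; ring

lemma u2_one_sub_right (u : ℝ) {v : ℝ} (hv : v ≠ 1 / 2) : u2 u (1 - v) = 1 - u2 u v := by
  simp only [u2, ind_one_sub hv]; ring

lemma u3lam_one_sub_left (b : ℝ) {u : ℝ} (v : ℝ) (hu : u ≠ 1 / 2) :
    u3lam b (1 - u) v = u3lam b u v := by
  simp only [u3lam, u3M, u3m, ind_one_sub hu]; ring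

lemma u3lam_one_sub_right (b u : ℝ) {v : ℝ} (hv : v ≠ 1 / 2) :
    u3lam b u (1 - v) = 1 - u3lam b u v := by
  simp only [u3lam, u3M, u3m, ind_one_sub hv]; ring

lemma u2_mem_Ioo {u : ℝ} (v : ℝ) (hu : u ∈ Ioo 0 1) : u2 u v ∈ Ioo 0 1 := by
  obtain ⟨h₀, h₁⟩ := hu
  unfold u2 ind
  split_ifs <;> constructor <;> linarith

lemma u3lam_mem_Ioo {b u : ℝ} (v : ℝ) (hb : b = 0 ∨ b = 1) (hu : u ∈ Ioo 0 1) :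
    u3lam b u v ∈ Ioo 0 1 := by
  obtain ⟨h₀, h₁⟩ := hu
  rcases hb with rfl | rfl <;>
  · unfold u3lam u3M u3m ind
    split_ifs <;> constructor <;> linarith

namespace ProbabilityTheory

variable {Ω α β : Type*} [MeasurableSpace Ω] [MeasurableSpace α] [MeasurableSpace β]
  {P : Measure Ω}

lemma IdentDistrib.integral_comp_eq_zero {X X' : Ω → α} (hX : IdentDistrib X' X P P)
    {g : α → ℝ} (hg : Measurable g) (hneg : ∀ᵐ ω ∂P, g (X' ω) = -g (X ω)) :
    ∫ ω, g (X ω) ∂P = 0 := by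
  have h : ∫ ω, g (X' ω) ∂P = ∫ ω, g (X ω) ∂P := (hX.comp hg).integral_eq
  rw [integral_congr_ae hneg, integral_neg] at h
  linarith

section Uniform

variable {U : Ω → ℝ} (hU : Measurable U) (hUunif : P.map U = volume.restrict (Icc 0 1))
include hU hUunif

lemma identDistrib_one_sub_of_uniform : IdentDistrib (fun ω => 1 - U ω) U P P where
  aemeasurable_fst := (measurable_const.sub hU).aemeasurable
  aemeasurable_snd := hU.aemeasurable
  map_eq := by
    have hR := (Measure.measurePreserving_sub_left volume (1 : ℝ)).restrict_preimage_emb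
      (MeasurableEquiv.subLeft (1 : ℝ)).measurableEmbedding (Icc 0 1)
    rw [preimage_const_sub_Icc, sub_zero, sub_self] at hR
    rw [hUunif, ← hR.map_eq, ← hUunif, Measure.map_map (measurable_const_sub 1) hU]
    rfl

lemma ae_mem_Ioo_ne_half_of_uniform : ∀ᵐ ω ∂P, U ω ∈ Ioo 0 1 ∧ U ω ≠ 1 / 2 := by
  refine ae_of_ae_map (p := fun x => x ∈ Ioo 0 1 ∧ x ≠ 1 / 2) hU.aemeasurable ?_
  rw [hUunif, ← Measure.restrict_congr_set Ioo_ae_eq_Icc]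
  filter_upwards [ae_restrict_mem measurableSet_Ioo,
    ae_restrict_of_ae ((countable_singleton (1 / 2 : ℝ)).ae_notMem volume)] with x hx hx'
  exact ⟨hx, hx'⟩

end Uniform

section Reflection

variable [IsFiniteMeasure P] {U V : Ω → ℝ} {W : Ω → β}
  (hU : Measurable U) (hV : Measurable V) (hW : Measurable W)
  (hUV : IndepFun U V P) (hUVW : IndepFun (fun ω => (U ω, V ω)) W P)
include hU hV hW hUV hUVW

lemma identDistrib_one_sub_fst (hUunif : P.map U = volume.restrict (Icc 0 1)) :
    IdentDistrib (fun ω => ((1 - U ω, V ω), W ω)) (fun ω => ((U ω, V ω), W ω)) P P :=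
  .prodMk (.prodMk (identDistrib_one_sub_of_uniform hU hUunif) (.refl hV.aemeasurable)
      (hUV.comp (measurable_const_sub 1) measurable_id) hUV) (.refl hW.aemeasurable)
    (hUVW.comp (measurable_fst.const_sub 1 |>.prodMk measurable_snd) measurable_id) hUVW

lemma identDistrib_one_sub_snd (hVunif : P.map V = volume.restrict (Icc 0 1)) :
    IdentDistrib (fun ω => ((U ω, 1 - V ω), W ω)) (fun ω => ((U ω, V ω), W ω)) P P :=
  .prodMk (.prodMk (.refl hU.aemeasurable) (identDistrib_one_sub_of_uniform hV hVunif)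
      (hUV.comp measurable_id (measurable_const_sub 1)) hUV) (.refl hW.aemeasurable)
    (hUVW.comp (measurable_fst.prodMk (measurable_snd.const_sub 1)) measurable_id) hUVW

end Reflection

end ProbabilityTheory


theorem stmt4_general {Ω : Type} [MeasurableSpace Ω] (P : Measure Ω) [IsProbabilityMeasure P]
    (U V B : Ω → ℝ)
    (hU : Measurable U) (hV : Measurable V) (hB : Measurable B)
    (hUunif : P.map U = volume.restrict (Set.Icc (0:ℝ) 1))
    (hVunif : P.map V = volume.restrict (Set.Icc (0:ℝ) 1))
    (hUV : IndepFun U V P)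
    (hB01 : ∀ ω, B ω = 0 ∨ B ω = 1)
    (hBind : IndepFun (fun ω => (U ω, V ω)) B P)
    (f₁ f₂ f₃ : ℝ → ℝ)
    (hf₁ : Measurable f₁) (hf₂ : Measurable f₂) (hf₃ : Measurable f₃)
    (hf₁sym : ∀ u ∈ Set.Ioo (0:ℝ) 1, f₁ (1 - u) = - f₁ u)
    (hf₂sym : ∀ u ∈ Set.Ioo (0:ℝ) 1, f₂ (1 - u) = - f₂ u)
    (hf₃sym : ∀ u ∈ Set.Ioo (0:ℝ) 1, f₃ (1 - u) = - f₃ u) :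
    (∫ ω, f₁ (U ω) * f₂ (u2 (U ω) (V ω)) ∂P = 0) ∧
    (∫ ω, f₁ (U ω)
        * f₃ (B ω * u3M (U ω) (V ω) + (1 - B ω) * u3m (U ω) (V ω)) ∂P = 0) ∧
    (∫ ω, f₂ (u2 (U ω) (V ω))
        * f₃ (B ω * u3M (U ω) (V ω) + (1 - B ω) * u3m (U ω) (V ω)) ∂P = 0) ∧
    (∫ ω, f₁ (U ω) ∂P = 0) ∧
    (∫ ω, f₂ (u2 (U ω) (V ω)) ∂P = 0) ∧
    (∫ ω, f₃ (B ω * u3M (U ω) (V ω) + (1 - B ω) * u3m (U ω) (V ω)) ∂P = 0) := by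
  have hflipU := identDistrib_one_sub_fst hU hV hB hUV hBind hUunif
  have hflipV := identDistrib_one_sub_snd hU hV hB hUV hBind hVunif
  have hUgood := ae_mem_Ioo_ne_half_of_uniform hU hUunif
  have hVgood := ae_mem_Ioo_ne_half_of_uniform hV hVunif
  refine ⟨?_, ?_, ?_, ?_, ?_, ?_⟩
  · refine hflipV.integral_comp_eq_zero
      (g := fun p => f₁ p.1.1 * f₂ (u2 p.1.1 p.1.2)) (by fun_prop) ?_
    filter_upwards [hUgood, hVgood] with ω hu hv
    simp only [u2_one_sub_right _ hv.2, hf₂sym _ (u2_mem_Ioo _ hu.1), mul_neg]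
  · refine hflipV.integral_comp_eq_zero
      (g := fun p => f₁ p.1.1 * f₃ (u3lam p.2 p.1.1 p.1.2)) (by fun_prop) ?_
    filter_upwards [hUgood, hVgood] with ω hu hv
    simp only [u3lam_one_sub_right _ _ hv.2, hf₃sym _ (u3lam_mem_Ioo _ (hB01 ω) hu.1), mul_neg]
  · refine hflipU.integral_comp_eq_zero
      (g := fun p => f₂ (u2 p.1.1 p.1.2) * f₃ (u3lam p.2 p.1.1 p.1.2)) (by fun_prop) ?_
    filter_upwards [hUgood] with ω hu
    simp only [u2_one_sub_left, u3lam_one_sub_left _ _ hu.2, hf₂sym _ (u2_mem_Ioo _ hu.1),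
      neg_mul]
  · refine hflipU.integral_comp_eq_zero (g := fun p => f₁ p.1.1) (by fun_prop) ?_
    filter_upwards [hUgood] with ω hu
    exact hf₁sym _ hu.1
  · refine hflipV.integral_comp_eq_zero
      (g := fun p => f₂ (u2 p.1.1 p.1.2)) (by fun_prop) ?_
    filter_upwards [hUgood, hVgood] with ω hu hv
    simp only [u2_one_sub_right _ hv.2, hf₂sym _ (u2_mem_Ioo _ hu.1)]
  · refine hflipV.integral_comp_eq_zero
      (g := fun p => f₃ (u3lam p.2 p.1.1 p.1.2)) (by fun_prop) ?_
    filter_upwards [hUgood, hVgood] with ω hu hv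
    simp only [u3lam_one_sub_right _ _ hv.2, hf₃sym _ (u3lam_mem_Ioo _ (hB01 ω) hu.1)]

/-- under the mixture copula `C^λ`, all three pairwise correlations vanish
and each `E[fᵢ] = 0`, so `f₁(U)`, `f₂(U₂)`, `f₃(U₃^λ)` are pairwise uncorrelated. -/
theorem stmt4 {Ω : Type} [MeasurableSpace Ω] (P : Measure Ω) [IsProbabilityMeasure P]
    (U V B : Ω → ℝ) (lam : ℝ) (hlam : lam ∈ Set.Icc (0:ℝ) 1)
    (hU : Measurable U) (hV : Measurable V) (hB : Measurable B)
    (hUunif : P.map U = volume.restrict (Set.Icc (0:ℝ) 1))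
    (hVunif : P.map V = volume.restrict (Set.Icc (0:ℝ) 1))
    (hUV : IndepFun U V P)
    (hB01 : ∀ ω, B ω = 0 ∨ B ω = 1)
    (hBlam : P {ω | B ω = 1} = ENNReal.ofReal lam)
    (hBind : IndepFun (fun ω => (U ω, V ω)) B P)
    (f₁ f₂ f₃ : ℝ → ℝ)
    (hf₁ : Measurable f₁) (hf₂ : Measurable f₂) (hf₃ : Measurable f₃)
    (hf₁mono : MonotoneOn f₁ (Set.Ioo 0 1)) (hf₂mono : MonotoneOn f₂ (Set.Ioo 0 1))
    (hf₃mono : MonotoneOn f₃ (Set.Ioo 0 1))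
    (hf₁sym : ∀ u ∈ Set.Ioo (0:ℝ) 1, f₁ (1 - u) = - f₁ u)
    (hf₂sym : ∀ u ∈ Set.Ioo (0:ℝ) 1, f₂ (1 - u) = - f₂ u)
    (hf₃sym : ∀ u ∈ Set.Ioo (0:ℝ) 1, f₃ (1 - u) = - f₃ u)
    (hf₁int : IntegrableOn (fun u => |f₁ u| ^ 3) (Set.Ioo (0:ℝ) 1) volume)
    (hf₂int : IntegrableOn (fun u => |f₂ u| ^ 3) (Set.Ioo (0:ℝ) 1) volume)
    (hf₃int : IntegrableOn (fun u => |f₃ u| ^ 3) (Set.Ioo (0:ℝ) 1) volume) :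
    (∫ ω, f₁ (U ω) * f₂ (u2 (U ω) (V ω)) ∂P = 0) ∧
    (∫ ω, f₁ (U ω)
        * f₃ (B ω * u3M (U ω) (V ω) + (1 - B ω) * u3m (U ω) (V ω)) ∂P = 0) ∧
    (∫ ω, f₂ (u2 (U ω) (V ω))
        * f₃ (B ω * u3M (U ω) (V ω) + (1 - B ω) * u3m (U ω) (V ω)) ∂P = 0) ∧
    (∫ ω, f₁ (U ω) ∂P = 0) ∧
    (∫ ω, f₂ (u2 (U ω) (V ω)) ∂P = 0) ∧
    (∫ ω, f₃ (B ω * u3M (U ω) (V ω) + (1 - B ω) * u3m (U ω) (V ω)) ∂P = 0) :=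
  stmt4_general P U V B hU hV hB hUunif hVunif hUV hB01 hBind f₁ f₂ f₃ hf₁ hf₂ hf₃ hf₁sym hf₂sym
    hf₃sym
end

section
/- Coskewness bound for symmetric marginals: for ANY random vector (X₁, X₂, X₃) on a probability space such that X_i has the same distribution as f_i(U) for each i (with arbitrary joint dependence), the expected triple product satisfies |E[X₁X₂X₃]| ≤ ∫₀¹ |f₁(u)f₂(u)f₃(u)| du, provided E[|X₁X₂X₃|] < ∞. -/
open MeasureTheory ProbabilityTheory Set

/-! By the layer-cake formula, `E|X₁X₂X₃|` is the integral over `s, t, r > 0` of the joint tail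
`P(|X₁| > s, |X₂| > t, |X₃| > r)`, which is at most the smallest of the three marginal tails.
For symmetric quantiles, `|fᵢ u|` is a nondecreasing function of `max u (1 - u)`, so the
superlevel sets of the `|fᵢ|` are nested and the joint tail of `(f₁, f₂, f₃)(U)` equals that
minimum. Integrating back gives `E|X₁X₂X₃| ≤ ∫₀¹ |f₁f₂f₃|`, whose right side is finite by AM–GM
and the third moments. -/

theorem lintegral_ofReal_abs_mul_mul_eq {α : Type*} [MeasurableSpace α] (μ : Measure α) [SFinite μ]
    {g₁ g₂ g₃ : α → ℝ} (h₁ : Measurable g₁) (h₂ : Measurable g₂) (h₃ : Measurable g₃) :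
    ∫⁻ a, ENNReal.ofReal |g₁ a * g₂ a * g₃ a| ∂μ
      = ∫⁻ p in Ioi 0 ×ˢ Ioi 0 ×ˢ Ioi 0,
          μ {a | p.1 < |g₁ a| ∧ p.2.1 < |g₂ a| ∧ p.2.2 < |g₃ a|} := by
  set E : Set (α × ℝ × ℝ × ℝ) := {q | q.2.1 < |g₁ q.1|} ∩ ({q | q.2.2.1 < |g₂ q.1|} ∩
    {q | q.2.2.2 < |g₃ q.1|})
  have hE : MeasurableSet E := by
    refine (measurableSet_lt ?_ ?_).inter ((measurableSet_lt ?_ ?_).inter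
      (measurableSet_lt ?_ ?_)) <;> fun_prop
  have fiber (a : α) : Prod.mk a ⁻¹' E ∩ Ioi 0 ×ˢ Ioi 0 ×ˢ Ioi 0
      = Ioo 0 |g₁ a| ×ˢ Ioo 0 |g₂ a| ×ˢ Ioo 0 |g₃ a| := by
    ext p
    simp only [E, mem_inter_iff, mem_preimage, mem_ofPred_eq, mem_prod, mem_Ioi, mem_Ioo]
    tauto
  calc ∫⁻ a, ENNReal.ofReal |g₁ a * g₂ a * g₃ a| ∂μ
      = ∫⁻ a, (volume.restrict (Ioi 0 ×ˢ Ioi 0 ×ˢ Ioi 0)) (Prod.mk a ⁻¹' E) ∂μ := by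
        refine lintegral_congr fun a => ?_
        rw [Measure.restrict_apply (measurable_prodMk_left hE), fiber, Measure.volume_eq_prod,
          Measure.prod_prod, Measure.volume_eq_prod, Measure.prod_prod]
        simp only [Real.volume_Ioo, sub_zero, abs_mul]
        rw [ENNReal.ofReal_mul (by positivity), ENNReal.ofReal_mul (by positivity), mul_assoc]
    _ = μ.prod (volume.restrict (Ioi 0 ×ˢ Ioi 0 ×ˢ Ioi 0)) E := (Measure.prod_apply hE).symm
    _ = _ := Measure.prod_apply_symm hE

theorem setOf_lt_inter_subset_total {α β γ δ : Type*} [LinearOrder β] [Preorder γ] [Preorder δ]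
    {I : Set α} {m : α → β} {F : α → γ} {G : α → δ}
    (hF : ∀ x ∈ I, ∀ y ∈ I, m x ≤ m y → F x ≤ F y) (hG : ∀ x ∈ I, ∀ y ∈ I, m x ≤ m y → G x ≤ G y)
    (s : γ) (t : δ) :
    {u | s < F u} ∩ I ⊆ {u | t < G u} ∩ I ∨ {u | t < G u} ∩ I ⊆ {u | s < F u} ∩ I := by
  by_contra! hcon
  obtain ⟨x, ⟨hxF, hxI⟩, hxG⟩ := not_subset.mp hcon.1
  obtain ⟨y, ⟨hyG, hyI⟩, hyF⟩ := not_subset.mp hcon.2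
  rcases le_total (m x) (m y) with h | h
  · exact hyF ⟨hxF.trans_le (hF x hxI y hyI h), hyI⟩
  · exact hxG ⟨hyG.trans_le (hG y hyI x hxI h), hxI⟩

theorem measure_inter_inter_le_of_total {Ω γ : Type*} [MeasurableSpace Ω] [MeasurableSpace γ]
    {P : Measure Ω} {Q : Measure γ} {A₁ A₂ A₃ : Set Ω} {B₁ B₂ B₃ : Set γ}
    (h₁ : P A₁ = Q B₁) (h₂ : P A₂ = Q B₂) (h₃ : P A₃ = Q B₃)
    (h₁₂ : B₁ ⊆ B₂ ∨ B₂ ⊆ B₁) (h₁₃ : B₁ ⊆ B₃ ∨ B₃ ⊆ B₁) (h₂₃ : B₂ ⊆ B₃ ∨ B₃ ⊆ B₂) :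
    P (A₁ ∩ (A₂ ∩ A₃)) ≤ Q (B₁ ∩ (B₂ ∩ B₃)) := by
  have hmin : B₁ ⊆ B₁ ∩ (B₂ ∩ B₃) ∨ B₂ ⊆ B₁ ∩ (B₂ ∩ B₃) ∨ B₃ ⊆ B₁ ∩ (B₂ ∩ B₃) := by
    simp only [subset_inter_iff, subset_refl, true_and, and_true]
    grind [Subset.trans]
  rcases hmin with h | h | h
  · exact (measure_mono fun ω hω => hω.1).trans (h₁ ▸ measure_mono h)
  · exact (measure_mono fun ω hω => hω.2.1).trans (h₂ ▸ measure_mono h)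
  · exact (measure_mono fun ω hω => hω.2.2).trans (h₃ ▸ measure_mono h)

def IsSymmetricQuantile (f : ℝ → ℝ) : Prop :=
  MonotoneOn f (Ioo 0 1) ∧ ∀ u ∈ Ioo (0 : ℝ) 1, f (1 - u) = -f u

namespace IsSymmetricQuantile

variable {f : ℝ → ℝ} (hf : IsSymmetricQuantile f)
include hf

theorem abs_eq_apply_max_one_sub {u : ℝ} (hu : u ∈ Ioo (0 : ℝ) 1) :
    |f u| = f (max u (1 - u)) := by
  have hu' : 1 - u ∈ Ioo (0 : ℝ) 1 := ⟨by linarith [hu.2], by linarith [hu.1]⟩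
  rcases le_total u (1 - u) with h | h
  · have := hf.1 hu hu' h
    rw [hf.2 u hu] at this
    rw [max_eq_right h, hf.2 u hu, abs_of_nonpos (by linarith)]
  · have := hf.1 hu' hu h
    rw [hf.2 u hu] at this
    rw [max_eq_left h, abs_of_nonneg (by linarith)]

theorem abs_le_abs_of_max_one_sub_le {x : ℝ} (hx : x ∈ Ioo (0 : ℝ) 1) {y : ℝ}
    (hy : y ∈ Ioo (0 : ℝ) 1) (h : max x (1 - x) ≤ max y (1 - y)) : |f x| ≤ |f y| := by
  rw [hf.abs_eq_apply_max_one_sub hx, hf.abs_eq_apply_max_one_sub hy]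
  refine hf.1 ⟨lt_max_of_lt_left hx.1, max_lt hx.2 ?_⟩ ⟨lt_max_of_lt_left hy.1, max_lt hy.2 ?_⟩ h
  · linarith [hx.1]
  · linarith [hy.1]

end IsSymmetricQuantile

theorem abs_mul_mul_le_sum_abs_pow_three (x y z : ℝ) :
    |x * y * z| ≤ |x| ^ 3 + |y| ^ 3 + |z| ^ 3 := by
  rw [abs_mul, abs_mul]
  have ha := abs_nonneg x
  have hb := abs_nonneg y
  have hc := abs_nonneg z
  nlinarith [mul_nonneg ha (sq_nonneg (|y| - |z|)), mul_nonneg hb (sq_nonneg (|x| - |z|)),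
    mul_nonneg hc (sq_nonneg (|x| - |y|)), mul_nonneg (mul_nonneg ha hb) hc]

theorem MeasureTheory.Integrable.mul_mul_of_abs_pow_three {α : Type*} [MeasurableSpace α]
    {μ : Measure α} {f g h : α → ℝ} (hfm : AEStronglyMeasurable f μ)
    (hgm : AEStronglyMeasurable g μ) (hhm : AEStronglyMeasurable h μ)
    (hf : Integrable (fun a => |f a| ^ 3) μ) (hg : Integrable (fun a => |g a| ^ 3) μ)
    (hh : Integrable (fun a => |h a| ^ 3) μ) :
    Integrable (fun a => f a * g a * h a) μ :=
  ((hf.add hg).add hh).mono' ((hfm.mul hgm).mul hhm) <| ae_of_all _ fun a =>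
    abs_mul_mul_le_sum_abs_pow_three (f a) (g a) (h a)

theorem measure_abs_lt_le_of_identDistrib_symmetricQuantile {Ω : Type*} [MeasurableSpace Ω]
    {P : Measure Ω} {X₁ X₂ X₃ : Ω → ℝ} {f₁ f₂ f₃ : ℝ → ℝ} (hf₁ : IsSymmetricQuantile f₁)
    (hf₂ : IsSymmetricQuantile f₂) (hf₃ : IsSymmetricQuantile f₃)
    (h₁ : IdentDistrib X₁ f₁ P (volume.restrict (Ioo 0 1)))
    (h₂ : IdentDistrib X₂ f₂ P (volume.restrict (Ioo 0 1)))
    (h₃ : IdentDistrib X₃ f₃ P (volume.restrict (Ioo 0 1))) (s t r : ℝ) :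
    P {ω | s < |X₁ ω| ∧ t < |X₂ ω| ∧ r < |X₃ ω|}
      ≤ volume.restrict (Ioo 0 1) {u | s < |f₁ u| ∧ t < |f₂ u| ∧ r < |f₃ u|} := by
  have tail {X : Ω → ℝ} {f : ℝ → ℝ} (h : IdentDistrib X f P (volume.restrict (Ioo 0 1)))
      (c : ℝ) : P {ω | c < |X ω|} = volume ({u | c < |f u|} ∩ Ioo 0 1) := by
    rw [← Measure.restrict_apply' measurableSet_Ioo]
    exact h.measure_mem_eq (measurableSet_lt measurable_const measurable_abs)
  have total {f g : ℝ → ℝ} (hf : IsSymmetricQuantile f) (hg : IsSymmetricQuantile g) (a b : ℝ) :=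
    setOf_lt_inter_subset_total (m := fun u => max u (1 - u))
      (fun _ hx _ hy => hf.abs_le_abs_of_max_one_sub_le hx hy)
      (fun _ hx _ hy => hg.abs_le_abs_of_max_one_sub_le hx hy) a b
  calc P {ω | s < |X₁ ω| ∧ t < |X₂ ω| ∧ r < |X₃ ω|}
      ≤ volume (({u | s < |f₁ u|} ∩ Ioo 0 1) ∩
          (({u | t < |f₂ u|} ∩ Ioo 0 1) ∩ ({u | r < |f₃ u|} ∩ Ioo 0 1))) :=
        measure_inter_inter_le_of_total (tail h₁ s) (tail h₂ t) (tail h₃ r)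
          (total hf₁ hf₂ s t) (total hf₁ hf₃ s r) (total hf₂ hf₃ t r)
    _ = _ := by
        rw [Measure.restrict_apply' measurableSet_Ioo]
        congr 1
        ext u
        simp only [mem_inter_iff, mem_ofPred_eq]
        tauto

theorem stmt5_general {Ω : Type} [MeasurableSpace Ω] (P : Measure Ω) [IsProbabilityMeasure P]
    (X₁ X₂ X₃ : Ω → ℝ)
    (hX₁ : Measurable X₁) (hX₂ : Measurable X₂) (hX₃ : Measurable X₃)
    (f₁ f₂ f₃ : ℝ → ℝ)
    (hf₁ : Measurable f₁) (hf₂ : Measurable f₂) (hf₃ : Measurable f₃)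
    (hf₁mono : MonotoneOn f₁ (Set.Ioo 0 1)) (hf₂mono : MonotoneOn f₂ (Set.Ioo 0 1))
    (hf₃mono : MonotoneOn f₃ (Set.Ioo 0 1))
    (hf₁sym : ∀ u ∈ Set.Ioo (0:ℝ) 1, f₁ (1 - u) = - f₁ u)
    (hf₂sym : ∀ u ∈ Set.Ioo (0:ℝ) 1, f₂ (1 - u) = - f₂ u)
    (hf₃sym : ∀ u ∈ Set.Ioo (0:ℝ) 1, f₃ (1 - u) = - f₃ u)
    (hf₁int : IntegrableOn (fun u => |f₁ u| ^ 3) (Set.Ioo (0:ℝ) 1) volume)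
    (hf₂int : IntegrableOn (fun u => |f₂ u| ^ 3) (Set.Ioo (0:ℝ) 1) volume)
    (hf₃int : IntegrableOn (fun u => |f₃ u| ^ 3) (Set.Ioo (0:ℝ) 1) volume)
    (hX₁dist : P.map X₁ = (volume.restrict (Set.Ioo (0:ℝ) 1)).map f₁)
    (hX₂dist : P.map X₂ = (volume.restrict (Set.Ioo (0:ℝ) 1)).map f₂)
    (hX₃dist : P.map X₃ = (volume.restrict (Set.Ioo (0:ℝ) 1)).map f₃) :
    |∫ ω, X₁ ω * X₂ ω * X₃ ω ∂P| ≤ ∫ u in Set.Ioo (0:ℝ) 1, |f₁ u * f₂ u * f₃ u| := by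
  have hlint : ∫⁻ ω, ENNReal.ofReal |X₁ ω * X₂ ω * X₃ ω| ∂P
      ≤ ∫⁻ u in Ioo 0 1, ENNReal.ofReal |f₁ u * f₂ u * f₃ u| := by
    rw [lintegral_ofReal_abs_mul_mul_eq P hX₁ hX₂ hX₃,
      lintegral_ofReal_abs_mul_mul_eq _ hf₁ hf₂ hf₃]
    exact lintegral_mono fun p => measure_abs_lt_le_of_identDistrib_symmetricQuantile
      ⟨hf₁mono, hf₁sym⟩ ⟨hf₂mono, hf₂sym⟩ ⟨hf₃mono, hf₃sym⟩
      ⟨hX₁.aemeasurable, hf₁.aemeasurable, hX₁dist⟩ ⟨hX₂.aemeasurable, hf₂.aemeasurable, hX₂dist⟩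
      ⟨hX₃.aemeasurable, hf₃.aemeasurable, hX₃dist⟩ p.1 p.2.1 p.2.2
  have hfint : IntegrableOn (fun u => f₁ u * f₂ u * f₃ u) (Ioo 0 1) :=
    Integrable.mul_mul_of_abs_pow_three hf₁.aestronglyMeasurable hf₂.aestronglyMeasurable
      hf₃.aestronglyMeasurable hf₁int hf₂int hf₃int
  calc |∫ ω, X₁ ω * X₂ ω * X₃ ω ∂P|
      ≤ ∫ ω, |X₁ ω * X₂ ω * X₃ ω| ∂P := abs_integral_le_integral_abs
    _ = (∫⁻ ω, ENNReal.ofReal |X₁ ω * X₂ ω * X₃ ω| ∂P).toReal :=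
        integral_eq_lintegral_of_nonneg_ae (ae_of_all _ fun _ => abs_nonneg _)
          ((hX₁.mul hX₂).mul hX₃).abs.aestronglyMeasurable
    _ ≤ (∫⁻ u in Ioo 0 1, ENNReal.ofReal |f₁ u * f₂ u * f₃ u|).toReal :=
        ENNReal.toReal_mono hfint.abs.lintegral_lt_top.ne hlint
    _ = ∫ u in Ioo 0 1, |f₁ u * f₂ u * f₃ u| :=
        (integral_eq_lintegral_of_nonneg_ae (ae_of_all _ fun _ => abs_nonneg _)
          ((hf₁.mul hf₂).mul hf₃).abs.aestronglyMeasurable).symm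

/-- for any random vector `(X₁, X₂, X₃)` whose components have the same
distributions as `f₁(U)`, `f₂(U)`, `f₃(U)` (with `U` uniform on `[0,1]` and `fᵢ`
symmetric quantile functions), `|E[X₁X₂X₃]| ≤ ∫₀¹ |f₁(u)f₂(u)f₃(u)| du`. -/
theorem stmt5 {Ω : Type} [MeasurableSpace Ω] (P : Measure Ω) [IsProbabilityMeasure P]
    (X₁ X₂ X₃ : Ω → ℝ)
    (hX₁ : Measurable X₁) (hX₂ : Measurable X₂) (hX₃ : Measurable X₃)
    (f₁ f₂ f₃ : ℝ → ℝ)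
    (hf₁ : Measurable f₁) (hf₂ : Measurable f₂) (hf₃ : Measurable f₃)
    (hf₁mono : MonotoneOn f₁ (Set.Ioo 0 1)) (hf₂mono : MonotoneOn f₂ (Set.Ioo 0 1))
    (hf₃mono : MonotoneOn f₃ (Set.Ioo 0 1))
    (hf₁sym : ∀ u ∈ Set.Ioo (0:ℝ) 1, f₁ (1 - u) = - f₁ u)
    (hf₂sym : ∀ u ∈ Set.Ioo (0:ℝ) 1, f₂ (1 - u) = - f₂ u)
    (hf₃sym : ∀ u ∈ Set.Ioo (0:ℝ) 1, f₃ (1 - u) = - f₃ u)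
    (hf₁int : IntegrableOn (fun u => |f₁ u| ^ 3) (Set.Ioo (0:ℝ) 1) volume)
    (hf₂int : IntegrableOn (fun u => |f₂ u| ^ 3) (Set.Ioo (0:ℝ) 1) volume)
    (hf₃int : IntegrableOn (fun u => |f₃ u| ^ 3) (Set.Ioo (0:ℝ) 1) volume)
    (hX₁dist : P.map X₁ = (volume.restrict (Set.Ioo (0:ℝ) 1)).map f₁)
    (hX₂dist : P.map X₂ = (volume.restrict (Set.Ioo (0:ℝ) 1)).map f₂)
    (hX₃dist : P.map X₃ = (volume.restrict (Set.Ioo (0:ℝ) 1)).map f₃)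
    (hint : Integrable (fun ω => X₁ ω * X₂ ω * X₃ ω) P) :
    |∫ ω, X₁ ω * X₂ ω * X₃ ω ∂P| ≤ ∫ u in Set.Ioo (0:ℝ) 1, |f₁ u * f₂ u * f₃ u| :=
  stmt5_general P X₁ X₂ X₃ hX₁ hX₂ hX₃ f₁ f₂ f₃ hf₁ hf₂ hf₃ hf₁mono hf₂mono hf₃mono hf₁sym hf₂sym
    hf₃sym hf₁int hf₂int hf₃int hX₁dist hX₂dist hX₃dist
end

section
/- For every real number s with |s| ≤ ∫₀¹ |f₁(u)f₂(u)f₃(u)| du, there exists a probability space carrying random variables X₁, X₂, X₃ such that X_i has the same distribution as f_i(U) for each i, the pairwise covariances E[X_iX_j] (i ≠ j) are all zero, and E[X₁X₂X₃] = s. In other words, with symmetric marginal distributions, every admissible value of coskewness can be attained simultaneously with all pairwise correlations equal to zero. -/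
open MeasureTheory ProbabilityTheory
open scoped ENNReal

/-! Take `U` uniform on `(0,1)` and, independently of it, a random sign vector `ε ∈ {±1}³` with
`P(ε) = (1 + t ε₁ε₂ε₃) / 8`, where `|t| ≤ 1` and `t ∫|f₁f₂f₃| = s`, and put `Xᵢ = εᵢ |fᵢ(U)|`.
Each `εᵢ` is a fair sign and `fᵢ(U)` is symmetric, so `Xᵢ` has the law of `fᵢ(U)`. The signs are
pairwise uncorrelated with `E[ε₁ε₂ε₃] = t`, and independence from `U` factors the moments:
`E[XᵢXⱼ] = 0` and `E[X₁X₂X₃] = t ∫|f₁f₂f₃| = s`. -/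

theorem MeasureTheory.Measure.map_abs_add_map_neg_abs (ρ : Measure ℝ) :
    ρ.map (fun x => |x|) + ρ.map (fun x => -|x|) = ρ + ρ.map Neg.neg := by
  have hS : MeasurableSet (Set.Ici (0 : ℝ)) := measurableSet_Ici
  set ρp := ρ.restrict (Set.Ici 0)
  set ρn := ρ.restrict (Set.Ici 0)ᶜ
  have on_nonneg : ∀ᵐ x ∂ρp, |x| = x :=
    (ae_restrict_iff' hS).2 (.of_forall fun x hx => abs_of_nonneg hx)
  have on_neg : ∀ᵐ x ∂ρn, |x| = -x :=
    (ae_restrict_iff' hS.compl).2 (.of_forall fun x hx => abs_of_neg (not_le.1 hx))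
  have h₁ : ρp.map (fun x => |x|) = ρp := (Measure.map_congr on_nonneg).trans Measure.map_id'
  have h₂ : ρn.map (fun x => |x|) = ρn.map Neg.neg := Measure.map_congr on_neg
  have h₃ : ρp.map (fun x => -|x|) = ρp.map Neg.neg :=
    Measure.map_congr (on_nonneg.mono fun x hx => by simp only [hx])
  have h₄ : ρn.map (fun x => -|x|) = ρn :=
    (Measure.map_congr (on_neg.mono fun x hx => by simp only [hx, neg_neg])).trans Measure.map_id'
  have hρ : ρp + ρn = ρ := Measure.restrict_add_restrict_compl hS
  rw [← hρ, Measure.map_add _ _ measurable_abs, Measure.map_add _ _ measurable_neg,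
    Measure.map_add _ _ (by fun_prop : Measurable fun x : ℝ => -|x|), h₁, h₂, h₃, h₄]
  abel

theorem measurePreserving_one_sub_restrict_Ioo :
    MeasurePreserving (fun x : ℝ => 1 - x) (volume.restrict (Set.Ioo 0 1))
      (volume.restrict (Set.Ioo 0 1)) := by
  have h := (Measure.measurePreserving_sub_left volume (1 : ℝ)).restrict_preimage
    (measurableSet_Ioo (a := (0 : ℝ)) (b := 1))
  have hpre : (fun x : ℝ => 1 - x) ⁻¹' Set.Ioo 0 1 = Set.Ioo 0 1 := by
    ext x
    simp only [Set.mem_preimage, Set.mem_Ioo]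
    constructor <;> rintro ⟨h₁, h₂⟩ <;> constructor <;> linarith
  rwa [hpre] at h

theorem map_neg_eq_map_of_apply_one_sub {f : ℝ → ℝ} (hf : Measurable f)
    (hsymm : ∀ u ∈ Set.Ioo (0 : ℝ) 1, f (1 - u) = -f u) :
    (volume.restrict (Set.Ioo 0 1)).map (fun u => -f u) = (volume.restrict (Set.Ioo 0 1)).map f := by
  have hae : (fun u => f (1 - u)) =ᵐ[volume.restrict (Set.Ioo 0 1)] fun u => -f u :=
    (ae_restrict_iff' measurableSet_Ioo).2 (.of_forall hsymm)
  rw [← Measure.map_congr hae]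
  exact (Measure.map_map hf measurePreserving_one_sub_restrict_Ioo.measurable).symm.trans
    (congrArg _ measurePreserving_one_sub_restrict_Ioo.map_eq)

def boolSign : Bool → ℝ
  | true => 1
  | false => -1

@[fun_prop]
theorem measurable_boolSign : Measurable boolSign := measurable_of_countable _

noncomputable def fairCoin : Measure Bool :=
  (2 : ℝ≥0∞)⁻¹ • (Measure.dirac true + Measure.dirac false)

theorem eq_fairCoin_of_integral_boolSign_eq_zero (κ : Measure Bool) [IsProbabilityMeasure κ]
    (h : ∫ b, boolSign b ∂κ = 0) : κ = fairCoin := by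
  have hsum := sum_measureReal_singleton (μ := κ) Finset.univ
  rw [Finset.coe_univ, probReal_univ, Fintype.sum_bool] at hsum
  rw [integral_fintype .of_finite] at h
  simp only [Fintype.sum_bool, boolSign, smul_eq_mul] at h
  refine Measure.ext_of_singleton fun b => ?_
  have hb : κ.real {b} = 2⁻¹ := by cases b <;> linarith
  rw [← ofReal_measureReal (measure_ne_top κ _), hb]
  cases b <;> simp [fairCoin, ENNReal.ofReal_inv_of_pos]

theorem map_fairCoin_prod_boolSign_mul_abs {α : Type*} [MeasurableSpace α] (μ : Measure α)
    [SFinite μ] {f : α → ℝ} (hf : Measurable f) (hsymm : μ.map (fun a => -f a) = μ.map f) :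
    (fairCoin.prod μ).map (fun p => boolSign p.1 * |f p.2|) = μ.map f := by
  have hg : Measurable fun p : Bool × α => boolSign p.1 * |f p.2| := by fun_prop
  have hdirac : ∀ b, ((Measure.dirac b).prod μ).map (fun p => boolSign p.1 * |f p.2|)
      = (μ.map f).map (fun x => boolSign b * |x|) := fun b => by
    rw [Measure.dirac_prod, Measure.map_map hg measurable_prodMk_left,
      Measure.map_map (by fun_prop) hf]
    rfl
  rw [fairCoin, Measure.prod_smul_left, Measure.add_prod, Measure.map_smul,
    Measure.map_add _ _ hg, hdirac, hdirac]
  simp only [boolSign, one_mul, neg_one_mul]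
  rw [Measure.map_abs_add_map_neg_abs, Measure.map_map measurable_neg hf]
  change _ • (_ + μ.map (fun a => -f a)) = _
  rw [hsymm, ← two_smul ℝ≥0∞, smul_smul, ENNReal.inv_mul_cancel two_ne_zero ENNReal.ofNat_ne_top,
    one_smul]

theorem map_prod_boolSign_mul_abs {S α : Type*} [MeasurableSpace S] [MeasurableSpace α]
    (ν : Measure S) [IsProbabilityMeasure ν] {π : S → Bool} (hπ : Measurable π)
    (hmean : ∫ ε, boolSign (π ε) ∂ν = 0) (μ : Measure α) [SFinite μ] {f : α → ℝ}
    (hf : Measurable f) (hsymm : μ.map (fun a => -f a) = μ.map f) :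
    (ν.prod μ).map (fun ω => boolSign (π ω.1) * |f ω.2|) = μ.map f := by
  have hcoin : ν.map π = fairCoin := by
    have := Measure.isProbabilityMeasure_map (μ := ν) hπ.aemeasurable
    refine eq_fairCoin_of_integral_boolSign_eq_zero _ ?_
    rwa [integral_map hπ.aemeasurable measurable_boolSign.aestronglyMeasurable]
  have hg : Measurable fun p : Bool × α => boolSign p.1 * |f p.2| := by fun_prop
  rw [← map_fairCoin_prod_boolSign_mul_abs μ hf hsymm, ← hcoin, ← Measure.map_id (μ := μ),
    Measure.map_prod_map _ _ hπ measurable_id, Measure.map_map hg (hπ.prodMap measurable_id),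
    Measure.map_id]
  rfl

noncomputable def signWeight (t : ℝ) (ε : Bool × Bool × Bool) : ℝ :=
  (1 + t * (boolSign ε.1 * boolSign ε.2.1 * boolSign ε.2.2)) / 8

noncomputable def signLaw (t : ℝ) : Measure (Bool × Bool × Bool) :=
  ∑ ε, ENNReal.ofReal (signWeight t ε) • Measure.dirac ε

theorem signWeight_nonneg {t : ℝ} (ht : |t| ≤ 1) (ε : Bool × Bool × Bool) :
    0 ≤ signWeight t ε := by
  obtain ⟨h₁, h₂⟩ := abs_le.1 ht
  rcases ε with ⟨a, b, c⟩
  cases a <;> cases b <;> cases c <;> simp only [signWeight, boolSign] <;> linarith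

theorem sum_signWeight (t : ℝ) : ∑ ε, signWeight t ε = 1 := by
  simp only [Fintype.sum_prod_type, Fintype.sum_bool, signWeight, boolSign]
  ring

theorem isProbabilityMeasure_signLaw {t : ℝ} (ht : |t| ≤ 1) :
    IsProbabilityMeasure (signLaw t) := by
  constructor
  simp [signLaw, ← ENNReal.ofReal_sum_of_nonneg fun ε _ => signWeight_nonneg ht ε, sum_signWeight t]

theorem integral_signLaw {t : ℝ} (ht : |t| ≤ 1) (g : Bool × Bool × Bool → ℝ) :
    ∫ ε, g ε ∂signLaw t = ∑ ε, signWeight t ε * g ε := by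
  rw [signLaw, integral_finsetSum_measure fun ε _ =>
    (Integrable.of_finite (μ := Measure.dirac ε)).smul_measure ENNReal.ofReal_ne_top]
  simp [integral_smul_measure, ENNReal.toReal_ofReal (signWeight_nonneg ht _)]

theorem integral_boolSign_signLaw {t : ℝ} (ht : |t| ≤ 1) :
    (∫ ε, boolSign ε.1 ∂signLaw t = 0) ∧ (∫ ε, boolSign ε.2.1 ∂signLaw t = 0) ∧
      ∫ ε, boolSign ε.2.2 ∂signLaw t = 0 := by
  simp only [integral_signLaw ht, Fintype.sum_prod_type, Fintype.sum_bool, signWeight, boolSign]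
  refine ⟨?_, ?_, ?_⟩ <;> ring

theorem integral_boolSign_mul_boolSign_signLaw {t : ℝ} (ht : |t| ≤ 1) :
    (∫ ε, boolSign ε.1 * boolSign ε.2.1 ∂signLaw t = 0) ∧
      (∫ ε, boolSign ε.1 * boolSign ε.2.2 ∂signLaw t = 0) ∧
      ∫ ε, boolSign ε.2.1 * boolSign ε.2.2 ∂signLaw t = 0 := by
  simp only [integral_signLaw ht, Fintype.sum_prod_type, Fintype.sum_bool, signWeight, boolSign]
  refine ⟨?_, ?_, ?_⟩ <;> ring

theorem integral_boolSign_mul_boolSign_mul_boolSign_signLaw {t : ℝ} (ht : |t| ≤ 1) :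
    ∫ ε, boolSign ε.1 * boolSign ε.2.1 * boolSign ε.2.2 ∂signLaw t = t := by
  simp only [integral_signLaw ht, Fintype.sum_prod_type, Fintype.sum_bool, signWeight, boolSign]
  ring

theorem exists_abs_le_one_mul_eq {s I : ℝ} (hs : |s| ≤ I) : ∃ t, |t| ≤ 1 ∧ t * I = s := by
  rcases (abs_nonneg s).trans hs |>.eq_or_lt with hI | hI
  · exact ⟨0, by simp, by simp [abs_nonpos_iff.1 (hI ▸ hs)]⟩
  · exact ⟨s / I, by rwa [abs_div, abs_of_pos hI, div_le_one hI], div_mul_cancel₀ s hI.ne'⟩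

theorem stmt6_general (f₁ f₂ f₃ : ℝ → ℝ)
    (hf₁ : Measurable f₁) (hf₂ : Measurable f₂) (hf₃ : Measurable f₃)
    (hf₁sym : ∀ u ∈ Set.Ioo (0:ℝ) 1, f₁ (1 - u) = - f₁ u)
    (hf₂sym : ∀ u ∈ Set.Ioo (0:ℝ) 1, f₂ (1 - u) = - f₂ u)
    (hf₃sym : ∀ u ∈ Set.Ioo (0:ℝ) 1, f₃ (1 - u) = - f₃ u)
    (s : ℝ) (hs : |s| ≤ ∫ u in Set.Ioo (0:ℝ) 1, |f₁ u * f₂ u * f₃ u|) :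
    ∃ (Ω : Type) (_ : MeasurableSpace Ω) (P : Measure Ω) (_ : IsProbabilityMeasure P)
      (X₁ X₂ X₃ : Ω → ℝ), Measurable X₁ ∧ Measurable X₂ ∧ Measurable X₃ ∧
      P.map X₁ = (volume.restrict (Set.Ioo (0:ℝ) 1)).map f₁ ∧
      P.map X₂ = (volume.restrict (Set.Ioo (0:ℝ) 1)).map f₂ ∧
      P.map X₃ = (volume.restrict (Set.Ioo (0:ℝ) 1)).map f₃ ∧
      (∫ ω, X₁ ω * X₂ ω ∂P = 0) ∧
      (∫ ω, X₁ ω * X₃ ω ∂P = 0) ∧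
      (∫ ω, X₂ ω * X₃ ω ∂P = 0) ∧
      ∫ ω, X₁ ω * X₂ ω * X₃ ω ∂P = s := by
  set μ := volume.restrict (Set.Ioo (0:ℝ) 1)
  have : IsProbabilityMeasure μ := ⟨by simp [μ, Real.volume_Ioo]⟩
  obtain ⟨t, ht, rfl⟩ := exists_abs_le_one_mul_eq hs
  have := isProbabilityMeasure_signLaw ht
  obtain ⟨m₁, m₂, m₃⟩ := integral_boolSign_signLaw ht
  obtain ⟨c₁₂, c₁₃, c₂₃⟩ := integral_boolSign_mul_boolSign_signLaw ht
  refine ⟨_, inferInstance, (signLaw t).prod μ, inferInstance,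
    fun ω => boolSign ω.1.1 * |f₁ ω.2|, fun ω => boolSign ω.1.2.1 * |f₂ ω.2|,
    fun ω => boolSign ω.1.2.2 * |f₃ ω.2|, by fun_prop, by fun_prop, by fun_prop,
    map_prod_boolSign_mul_abs _ (by fun_prop) m₁ μ hf₁ (map_neg_eq_map_of_apply_one_sub hf₁ hf₁sym),
    map_prod_boolSign_mul_abs _ (by fun_prop) m₂ μ hf₂ (map_neg_eq_map_of_apply_one_sub hf₂ hf₂sym),
    map_prod_boolSign_mul_abs _ (by fun_prop) m₃ μ hf₃ (map_neg_eq_map_of_apply_one_sub hf₃ hf₃sym),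
    ?_, ?_, ?_, ?_⟩
  · rw [← zero_mul (∫ u, |f₁ u * f₂ u| ∂μ), ← c₁₂, ← integral_prod_mul]
    congr 1 with ω; rw [abs_mul]; ring
  · rw [← zero_mul (∫ u, |f₁ u * f₃ u| ∂μ), ← c₁₃, ← integral_prod_mul]
    congr 1 with ω; rw [abs_mul]; ring
  · rw [← zero_mul (∫ u, |f₂ u * f₃ u| ∂μ), ← c₂₃, ← integral_prod_mul]
    congr 1 with ω; rw [abs_mul]; ring
  · conv_rhs => rw [← integral_boolSign_mul_boolSign_mul_boolSign_signLaw ht, ← integral_prod_mul]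
    congr 1 with ω; rw [abs_mul, abs_mul]; ring

/-- every coskewness value `s` with `|s| ≤ ∫₀¹ |f₁ f₂ f₃|` is attained by
some random vector whose components are distributed as `f₁(U)`, `f₂(U)`, `f₃(U)`
(with `U` uniform on `[0,1]`) and whose pairwise covariances all vanish. -/
theorem stmt6 (f₁ f₂ f₃ : ℝ → ℝ)
    (hf₁ : Measurable f₁) (hf₂ : Measurable f₂) (hf₃ : Measurable f₃)
    (hf₁mono : MonotoneOn f₁ (Set.Ioo 0 1)) (hf₂mono : MonotoneOn f₂ (Set.Ioo 0 1))
    (hf₃mono : MonotoneOn f₃ (Set.Ioo 0 1))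
    (hf₁sym : ∀ u ∈ Set.Ioo (0:ℝ) 1, f₁ (1 - u) = - f₁ u)
    (hf₂sym : ∀ u ∈ Set.Ioo (0:ℝ) 1, f₂ (1 - u) = - f₂ u)
    (hf₃sym : ∀ u ∈ Set.Ioo (0:ℝ) 1, f₃ (1 - u) = - f₃ u)
    (hf₁int : IntegrableOn (fun u => |f₁ u| ^ 3) (Set.Ioo (0:ℝ) 1) volume)
    (hf₂int : IntegrableOn (fun u => |f₂ u| ^ 3) (Set.Ioo (0:ℝ) 1) volume)
    (hf₃int : IntegrableOn (fun u => |f₃ u| ^ 3) (Set.Ioo (0:ℝ) 1) volume)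
    (s : ℝ) (hs : |s| ≤ ∫ u in Set.Ioo (0:ℝ) 1, |f₁ u * f₂ u * f₃ u|) :
    ∃ (Ω : Type) (_ : MeasurableSpace Ω) (P : Measure Ω) (_ : IsProbabilityMeasure P)
      (X₁ X₂ X₃ : Ω → ℝ), Measurable X₁ ∧ Measurable X₂ ∧ Measurable X₃ ∧
      P.map X₁ = (volume.restrict (Set.Ioo (0:ℝ) 1)).map f₁ ∧
      P.map X₂ = (volume.restrict (Set.Ioo (0:ℝ) 1)).map f₂ ∧
      P.map X₃ = (volume.restrict (Set.Ioo (0:ℝ) 1)).map f₃ ∧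
      (∫ ω, X₁ ω * X₂ ω ∂P = 0) ∧
      (∫ ω, X₁ ω * X₃ ω ∂P = 0) ∧
      (∫ ω, X₂ ω * X₃ ω ∂P = 0) ∧
      ∫ ω, X₁ ω * X₂ ω * X₃ ω ∂P = s :=
  stmt6_general f₁ f₂ f₃ hf₁ hf₂ hf₃ hf₁sym hf₂sym hf₃sym s hs
end

section
/- Under the mixture copula C^λ, the pairwise Spearman rank correlations vanish while the standardized rank coskewness spans [−1,1]: E[(U−1/2)(U₂−1/2)] = 0, E[(U−1/2)(U₃^λ−1/2)] = 0, E[(U₂−1/2)(U₃^λ−1/2)] = 0, and 32·E[(U−1/2)(U₂−1/2)(U₃^λ−1/2)] = 2λ−1 for every λ ∈ [0,1]. -/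
/-!
Write `s(x) = 2·1_{x>1/2} - 1 = ±1`. Case by case, `U₂ - 1/2 = s(V)(U - 1/2)` and
`U₃^λ - 1/2 = (2B - 1) s(U) s(V) (U - 1/2)`. Since `s(V)² = 1`, every moment in question is the
expectation of a product of a function of `U`, possibly `s(V)`, and possibly `2B - 1`, so it
factors by independence. The factors are `E[s(V)] = 0`, `E[(U - 1/2)² s(U)] = 0`,
`E[(U - 1/2)³ s(U)] = 1/32` and `E[2B - 1] = 2λ - 1`.
-/

open MeasureTheory ProbabilityTheory

open Set

noncomputable def halfSign (x : ℝ) : ℝ := 2 * ind x - 1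

@[fun_prop]
lemma measurable_halfSign : Measurable halfSign :=
  (measurable_const.mul (Measurable.ite measurableSet_Ioi measurable_const measurable_const)).sub
    measurable_const

lemma abs_halfSign (x : ℝ) : |halfSign x| = 1 := by
  unfold halfSign ind; split_ifs <;> norm_num

lemma halfSign_mul_self (x : ℝ) : halfSign x * halfSign x = 1 := by
  unfold halfSign ind; split_ifs <;> norm_num

lemma u2_sub_half (u v : ℝ) : u2 u v - 1/2 = halfSign v * (u - 1/2) := by
  unfold u2 halfSign ind; split_ifs <;> ring

lemma mixture_sub_half (u v b : ℝ) (hb : b = 0 ∨ b = 1) :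
    b * u3M u v + (1 - b) * u3m u v - 1/2
      = (2 * b - 1) * (halfSign u * halfSign v * (u - 1/2)) := by
  unfold u3M u3m halfSign ind; rcases hb with rfl | rfl <;> split_ifs <;> ring

lemma setIntegral_Icc_mul_halfSign {f : ℝ → ℝ} (hf : IntegrableOn f (Icc 0 1)) :
    ∫ x in Icc (0:ℝ) 1, f x * halfSign x
      = (∫ x in (1/2:ℝ)..1, f x) - ∫ x in (0:ℝ)..(1/2), f x := by
  have hfs : IntegrableOn (fun x => f x * halfSign x) (Ioc 0 1) :=
    (hf.mono_set Ioc_subset_Icc_self).mul_bdd measurable_halfSign.aestronglyMeasurable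
      (ae_of_all _ fun x => (abs_halfSign x).le)
  have hlow : ∫ x in Ioc (0:ℝ) (1/2), f x * halfSign x = -∫ x in Ioc (0:ℝ) (1/2), f x := by
    rw [← integral_neg]
    refine setIntegral_congr_fun measurableSet_Ioc fun x hx => ?_
    rw [halfSign, ind, if_neg (not_lt.2 hx.2)]; ring
  have hupp : ∫ x in Ioc (1/2:ℝ) 1, f x * halfSign x = ∫ x in Ioc (1/2:ℝ) 1, f x := by
    refine setIntegral_congr_fun measurableSet_Ioc fun x hx => ?_
    rw [halfSign, ind, if_pos hx.1]; ring
  rw [integral_Icc_eq_integral_Ioc,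
    ← Ioc_union_Ioc_eq_Ioc (by norm_num : (0:ℝ) ≤ 1/2) (by norm_num : (1:ℝ)/2 ≤ 1),
    setIntegral_union (Ioc_disjoint_Ioc_of_le le_rfl) measurableSet_Ioc
      (hfs.mono_set (Ioc_subset_Ioc_right (by norm_num)))
      (hfs.mono_set (Ioc_subset_Ioc_left (by norm_num))),
    hlow, hupp, intervalIntegral.integral_of_le (by norm_num : (0:ℝ) ≤ 1/2),
    intervalIntegral.integral_of_le (by norm_num : (1:ℝ)/2 ≤ 1)]
  ring

lemma setIntegral_Icc_pow_mul_halfSign (n : ℕ) :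
    ∫ x in Icc (0:ℝ) 1, (x - 1/2) ^ n * halfSign x
      = ((1/2) ^ (n + 1) + (-1/2) ^ (n + 1)) / (n + 1) := by
  have hcont : Continuous fun x : ℝ => (x - 1/2) ^ n := by fun_prop
  rw [setIntegral_Icc_mul_halfSign hcont.integrableOn_Icc,
    intervalIntegral.integral_comp_sub_right (fun x => x ^ n),
    intervalIntegral.integral_comp_sub_right (fun x => x ^ n), integral_pow, integral_pow]
  norm_num
  ring

lemma integral_pow_mul_halfSign_of_map_eq {Ω : Type*} [MeasurableSpace Ω] {P : Measure Ω}
    {X : Ω → ℝ} (hX : Measurable X) (hXunif : P.map X = volume.restrict (Icc 0 1)) (n : ℕ) :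
    ∫ ω, (X ω - 1/2) ^ n * halfSign (X ω) ∂P
      = ((1/2) ^ (n + 1) + (-1/2) ^ (n + 1)) / (n + 1) := by
  rw [← integral_map (f := fun x => (x - 1/2) ^ n * halfSign x) hX.aemeasurable
    (by fun_prop), hXunif, setIntegral_Icc_pow_mul_halfSign]

lemma integral_two_mul_sub_one_of_bernoulli {Ω : Type*} [MeasurableSpace Ω] {P : Measure Ω}
    [IsProbabilityMeasure P] {B : Ω → ℝ} {lam : ℝ} (hlam : 0 ≤ lam) (hB : Measurable B)
    (hB01 : ∀ ω, B ω = 0 ∨ B ω = 1) (hBlam : P {ω | B ω = 1} = ENNReal.ofReal lam) :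
    ∫ ω, (2 * B ω - 1) ∂P = 2 * lam - 1 := by
  have hmeas : MeasurableSet {ω | B ω = 1} := hB (measurableSet_singleton 1)
  have hB_eq : B = {ω | B ω = 1}.indicator 1 := by
    funext ω
    rcases hB01 ω with h | h <;> simp [indicator, h]
  have hEB : ∫ ω, B ω ∂P = lam := by
    rw [hB_eq, integral_indicator_one hmeas, measureReal_def, hBlam, ENNReal.toReal_ofReal hlam]
  have hBint : Integrable B P := by
    rw [hB_eq]; exact (integrable_const 1).indicator hmeas
  rw [integral_sub (hBint.const_mul 2) (integrable_const 1), integral_const_mul, hEB]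
  simp

/-- under the mixture copula `C^λ`, the pairwise Spearman rank correlations
vanish while the standardized rank coskewness equals `2λ−1`. -/
theorem stmt9 {Ω : Type} [MeasurableSpace Ω] (P : Measure Ω) [IsProbabilityMeasure P]
    (U V B : Ω → ℝ) (lam : ℝ) (hlam : lam ∈ Set.Icc (0:ℝ) 1)
    (hU : Measurable U) (hV : Measurable V) (hB : Measurable B)
    (hUunif : P.map U = volume.restrict (Set.Icc (0:ℝ) 1))
    (hVunif : P.map V = volume.restrict (Set.Icc (0:ℝ) 1))
    (hUV : IndepFun U V P)
    (hB01 : ∀ ω, B ω = 0 ∨ B ω = 1)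
    (hBlam : P {ω | B ω = 1} = ENNReal.ofReal lam)
    (hBind : IndepFun (fun ω => (U ω, V ω)) B P) :
    (∫ ω, (U ω - 1/2) * (u2 (U ω) (V ω) - 1/2) ∂P = 0) ∧
    (∫ ω, (U ω - 1/2)
        * ((B ω * u3M (U ω) (V ω) + (1 - B ω) * u3m (U ω) (V ω)) - 1/2) ∂P = 0) ∧
    (∫ ω, (u2 (U ω) (V ω) - 1/2)
        * ((B ω * u3M (U ω) (V ω) + (1 - B ω) * u3m (U ω) (V ω)) - 1/2) ∂P = 0) ∧
    32 * ∫ ω, (U ω - 1/2) * (u2 (U ω) (V ω) - 1/2)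
        * ((B ω * u3M (U ω) (V ω) + (1 - B ω) * u3m (U ω) (V ω)) - 1/2) ∂P
      = 2 * lam - 1 := by
  have hEsV : ∫ ω, halfSign (V ω) ∂P = 0 := by
    have h := integral_pow_mul_halfSign_of_map_eq hV hVunif 0
    norm_num at h
    exact h
  have hEB := integral_two_mul_sub_one_of_bernoulli hlam.1 hB hB01 hBlam
  have hUsV (f : ℝ → ℝ) (hf : Measurable f) : ∫ ω, f (U ω) * halfSign (V ω) ∂P = 0 := by
    rw [hUV.integral_fun_comp_mul_comp hU.aemeasurable hV.aemeasurable
      hf.aestronglyMeasurable measurable_halfSign.aestronglyMeasurable, hEsV, mul_zero]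
  have hUVB (f : ℝ × ℝ → ℝ) (hf : Measurable f) :
      ∫ ω, f (U ω, V ω) * (2 * B ω - 1) ∂P = (∫ ω, f (U ω, V ω) ∂P) * (2 * lam - 1) := by
    have hk : Measurable fun b : ℝ => 2 * b - 1 := by fun_prop
    rw [hBind.integral_fun_comp_mul_comp (by fun_prop) hB.aemeasurable
      hf.aestronglyMeasurable hk.aestronglyMeasurable, hEB]
  simp only [u2_sub_half, mixture_sub_half _ _ _ (hB01 _)]
  refine ⟨?_, ?_, ?_, ?_⟩
  · rw [← hUsV (fun u => (u - 1/2) ^ 2) (by fun_prop)]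
    congr 1; ext ω; ring
  · calc _ = ∫ ω, ((U ω - 1/2) ^ 2 * halfSign (U ω) * halfSign (V ω)) * (2 * B ω - 1) ∂P := by
          congr 1; ext ω; ring
      _ = 0 := by
          rw [hUVB (fun p => (p.1 - 1/2) ^ 2 * halfSign p.1 * halfSign p.2) (by fun_prop),
            hUsV (fun u => (u - 1/2) ^ 2 * halfSign u) (by fun_prop), zero_mul]
  · calc _ = ∫ ω, ((U ω - 1/2) ^ 2 * halfSign (U ω)) * (2 * B ω - 1) ∂P := by
          congr 1; ext ω
          linear_combination
            (U ω - 1/2) ^ 2 * halfSign (U ω) * (2 * B ω - 1) * halfSign_mul_self (V ω)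
      _ = 0 := by
          rw [hUVB (fun p => (p.1 - 1/2) ^ 2 * halfSign p.1) (by fun_prop),
            integral_pow_mul_halfSign_of_map_eq hU hUunif 2]
          norm_num
  · calc _ = 32 * ∫ ω, ((U ω - 1/2) ^ 3 * halfSign (U ω)) * (2 * B ω - 1) ∂P := by
          congr 2; ext ω
          linear_combination
            (U ω - 1/2) ^ 3 * halfSign (U ω) * (2 * B ω - 1) * halfSign_mul_self (V ω)
      _ = 2 * lam - 1 := by
          rw [hUVB (fun p => (p.1 - 1/2) ^ 3 * halfSign p.1) (by fun_prop),
            integral_pow_mul_halfSign_of_map_eq hU hUunif 3]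
          ring
end

section
/- Standardized rank coskewness always lies in [−1,1]: for any three random variables U₁, U₂, U₃ defined on a common probability space, each uniformly distributed on [0,1] (with arbitrary joint dependence), |E[(U₁−1/2)(U₂−1/2)(U₃−1/2)]| ≤ 1/32, i.e. the standardized rank coskewness 32·E[(U₁−1/2)(U₂−1/2)(U₃−1/2)] lies in [−1,1]. -/
open MeasureTheory ProbabilityTheory

lemma stmt10_key : ∫ x in Set.Icc (0:ℝ) 1, |x - 1/2|^3 = 1/32 := by
  rw [MeasureTheory.integral_Icc_eq_integral_Ioc,
    ← intervalIntegral.integral_of_le (by norm_num : (0:ℝ) ≤ 1)]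
  have h1 : IntervalIntegrable (fun x : ℝ => |x - 1/2|^3) volume 0 (1/2) :=
    (Continuous.intervalIntegrable (by continuity) _ _)
  have h2 : IntervalIntegrable (fun x : ℝ => |x - 1/2|^3) volume (1/2) 1 :=
    (Continuous.intervalIntegrable (by continuity) _ _)
  rw [← intervalIntegral.integral_add_adjacent_intervals h1 h2]
  have e1 : ∫ x in (0:ℝ)..(1/2), |x - 1/2|^3 = ∫ x in (0:ℝ)..(1/2), (1/2 - x)^3 := by
    apply intervalIntegral.integral_congr
    intro x hx
    rw [Set.uIcc_of_le (by norm_num)] at hx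
    obtain ⟨hxa, hxb⟩ := hx
    simp only
    rw [abs_of_nonpos (by linarith)]
    ring
  have e2 : ∫ x in (1/2:ℝ)..1, |x - 1/2|^3 = ∫ x in (1/2:ℝ)..1, (x - 1/2)^3 := by
    apply intervalIntegral.integral_congr
    intro x hx
    rw [Set.uIcc_of_le (by norm_num)] at hx
    obtain ⟨hxa, hxb⟩ := hx
    simp only
    rw [abs_of_nonneg (by linarith)]
  rw [e1, e2,
    intervalIntegral.integral_comp_sub_left (fun x : ℝ => x^3) (1/2:ℝ),
    intervalIntegral.integral_comp_sub_right (fun x : ℝ => x^3) (1/2:ℝ),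
    integral_pow, integral_pow]
  norm_num

lemma stmt10_aux {Ω : Type} [MeasurableSpace Ω] (P : Measure Ω) [IsProbabilityMeasure P]
    (U : Ω → ℝ) (hU : Measurable U)
    (hunif : P.map U = volume.restrict (Set.Icc (0:ℝ) 1)) :
    Integrable (fun ω => |U ω - 1/2|^3) P ∧ ∫ ω, |U ω - 1/2|^3 ∂P = 1/32 := by
  have hg : Continuous (fun x : ℝ => |x - 1/2|^3) := by continuity
  have hmap : Integrable (fun x : ℝ => |x - 1/2|^3) (P.map U) := by
    rw [hunif]
    exact (hg.continuousOn.integrableOn_compact isCompact_Icc)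
  constructor
  · exact (integrable_map_measure hg.aestronglyMeasurable hU.aemeasurable).mp hmap
  · rw [← integral_map hU.aemeasurable hg.aestronglyMeasurable, hunif]
    exact stmt10_key

lemma stmt10_amgm (x y z : ℝ) : |x * y * z| ≤ (|x|^3 + |y|^3 + |z|^3) / 3 := by
  rw [abs_mul, abs_mul]
  have ha := abs_nonneg x
  have hb := abs_nonneg y
  have hc := abs_nonneg z
  nlinarith [sq_nonneg (|x| - |y|), sq_nonneg (|y| - |z|), sq_nonneg (|x| - |z|),
    mul_nonneg ha hb, mul_nonneg hb hc, mul_nonneg ha hc,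
    mul_nonneg (mul_nonneg ha hb) hc]

/-- standardized rank coskewness always lies in `[−1,1]`: for any three
random variables each uniformly distributed on `[0,1]`, with arbitrary joint
dependence, `|E[(U₁−1/2)(U₂−1/2)(U₃−1/2)]| ≤ 1/32`. -/
theorem stmt10 {Ω : Type} [MeasurableSpace Ω] (P : Measure Ω) [IsProbabilityMeasure P]
    (U₁ U₂ U₃ : Ω → ℝ)
    (hU₁ : Measurable U₁) (hU₂ : Measurable U₂) (hU₃ : Measurable U₃)
    (hU₁unif : P.map U₁ = volume.restrict (Set.Icc (0:ℝ) 1))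
    (hU₂unif : P.map U₂ = volume.restrict (Set.Icc (0:ℝ) 1))
    (hU₃unif : P.map U₃ = volume.restrict (Set.Icc (0:ℝ) 1)) :
    |∫ ω, (U₁ ω - 1/2) * (U₂ ω - 1/2) * (U₃ ω - 1/2) ∂P| ≤ 1/32 := by
  obtain ⟨hi₁, he₁⟩ := stmt10_aux P U₁ hU₁ hU₁unif
  obtain ⟨hi₂, he₂⟩ := stmt10_aux P U₂ hU₂ hU₂unif
  obtain ⟨hi₃, he₃⟩ := stmt10_aux P U₃ hU₃ hU₃unif
  have hI : Integrable (fun ω =>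
      (|U₁ ω - 1/2|^3 + |U₂ ω - 1/2|^3 + |U₃ ω - 1/2|^3) / 3) P :=
    ((hi₁.add hi₂).add hi₃).div_const 3
  have step1 : |∫ ω, (U₁ ω - 1/2) * (U₂ ω - 1/2) * (U₃ ω - 1/2) ∂P|
      ≤ ∫ ω, |(U₁ ω - 1/2) * (U₂ ω - 1/2) * (U₃ ω - 1/2)| ∂P := by
    have := norm_integral_le_integral_norm (μ := P)
      (f := fun ω => (U₁ ω - 1/2) * (U₂ ω - 1/2) * (U₃ ω - 1/2))
    simpa only [Real.norm_eq_abs] using this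
  have step2 : ∫ ω, |(U₁ ω - 1/2) * (U₂ ω - 1/2) * (U₃ ω - 1/2)| ∂P
      ≤ ∫ ω, (|U₁ ω - 1/2|^3 + |U₂ ω - 1/2|^3 + |U₃ ω - 1/2|^3) / 3 ∂P := by
    apply integral_mono_of_nonneg
    · exact Filter.Eventually.of_forall fun ω => abs_nonneg _
    · exact hI
    · exact Filter.Eventually.of_forall fun ω => stmt10_amgm _ _ _
  have step3 : ∫ ω, (|U₁ ω - 1/2|^3 + |U₂ ω - 1/2|^3 + |U₃ ω - 1/2|^3) / 3 ∂P = 1/32 := by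
    have hi₁₂ : Integrable (fun ω => |U₁ ω - 1/2|^3 + |U₂ ω - 1/2|^3) P := hi₁.add hi₂
    rw [integral_div, integral_add hi₁₂ hi₃, integral_add hi₁ hi₂, he₁, he₂, he₃]
    norm_num
  linarith
end

section
/- The Gaussian copula has zero standardized rank coskewness: for any centered trivariate Gaussian vector with unit variances, H_i = Σ_k a_{ik}Z_k (i = 1,2,3) with Σ_k a_{ik}² = 1, one has E[(Φ(H₁)−1/2)·(Φ(H₂)−1/2)·(Φ(H₃)−1/2)] = 0, regardless of the pairwise correlations ρ_{ij} = Σ_k a_{ik}a_{jk}. -/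
/-!
The standard Gaussian vector `Z` has the same law as `-Z`, and `Φ(-x) - 1/2 = -(Φ(x) - 1/2)`.
Flipping the sign of `Z` therefore flips the sign of each of the three factors, hence of the
integrand, so its expectation equals its own negative.
-/

open MeasureTheory ProbabilityTheory Real

/-- The cumulative distribution function `Φ` of the standard normal distribution. -/
noncomputable def stdNormalCDF (x : ℝ) : ℝ := ((gaussianReal 0 1) (Set.Iic x)).toReal

open Set

instance isNegInvariant_gaussianReal (v : NNReal) : (gaussianReal 0 v).IsNegInvariant :=
  ⟨by simpa [Measure.neg_def] using gaussianReal_map_neg (μ := 0) (v := v)⟩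

lemma measureReal_Iic_neg {μ : Measure ℝ} [IsProbabilityMeasure μ] [μ.IsNegInvariant] {x : ℝ}
    (hx : μ {x} = 0) : μ.real (Iic (-x)) = 1 - μ.real (Iic x) := by
  have hIci : μ.real (Iic (-x)) = μ.real (Ici x) := by
    rw [measureReal_def, measureReal_def, ← Measure.measure_neg, neg_Iic, neg_neg]
  rw [hIci, ← compl_Iio, measureReal_compl measurableSet_Iio, probReal_univ,
    measureReal_congr (Iio_ae_eq_Iic' hx)]

lemma stdNormalCDF_eq_measureReal (x : ℝ) : stdNormalCDF x = (gaussianReal 0 1).real (Iic x) := rfl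

lemma stdNormalCDF_neg_sub_half (x : ℝ) :
    stdNormalCDF (-x) - 1 / 2 = -(stdNormalCDF x - 1 / 2) := by
  have hx : gaussianReal 0 1 {x} = 0 :=
    gaussianReal_absolutelyContinuous 0 one_ne_zero Real.volume_singleton
  rw [stdNormalCDF_eq_measureReal, stdNormalCDF_eq_measureReal, measureReal_Iic_neg hx]
  ring

@[fun_prop]
lemma measurable_stdNormalCDF : Measurable stdNormalCDF :=
  Monotone.measurable fun _ _ hxy =>
    ENNReal.toReal_mono (measure_ne_top _ _) (measure_mono (Iic_subset_Iic.2 hxy))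

lemma integral_eq_zero_of_odd {G E : Type*} [MeasurableSpace G] [AddGroup G] [MeasurableNeg G]
    [NormedAddCommGroup E] [NormedSpace ℝ E] (μ : Measure G) [μ.IsNegInvariant] {f : G → E}
    (hf : ∀ x, f (-x) = -f x) : ∫ x, f x ∂μ = 0 := by
  have h := integral_neg_eq_self f μ
  simp only [hf, integral_neg] at h
  have := IsAddTorsionFree.of_isTorsionFree ℝ E
  exact neg_eq_self.mp h

theorem stmt15_general {Ω : Type} [MeasurableSpace Ω] (P : Measure Ω) [IsProbabilityMeasure P]
    (Z : Fin 3 → Ω → ℝ)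
    (hZmeas : ∀ i, Measurable (Z i))
    (hZindep : iIndepFun Z P)
    (hZdist : ∀ i, P.map (Z i) = gaussianReal 0 1)
    (a : Fin 3 → Fin 3 → ℝ) :
    ∫ ω, (stdNormalCDF (∑ k, a 0 k * Z k ω) - 1/2)
        * (stdNormalCDF (∑ k, a 1 k * Z k ω) - 1/2)
        * (stdNormalCDF (∑ k, a 2 k * Z k ω) - 1/2) ∂P = 0 := by
  set g : (Fin 3 → ℝ) → ℝ := fun z => (stdNormalCDF (∑ k, a 0 k * z k) - 1/2)
    * (stdNormalCDF (∑ k, a 1 k * z k) - 1/2) * (stdNormalCDF (∑ k, a 2 k * z k) - 1/2)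
  have hg_odd (z : Fin 3 → ℝ) : g (-z) = -g z := by
    simp only [g, Pi.neg_apply, mul_neg, Finset.sum_neg_distrib, stdNormalCDF_neg_sub_half]
    ring
  have hZvec : Measurable fun ω i => Z i ω := measurable_pi_lambda _ hZmeas
  have hlaw : P.map (fun ω i => Z i ω) = Measure.pi fun _ => gaussianReal 0 1 := by
    rw [hZindep.map_fun_eq_pi_map fun i => (hZmeas i).aemeasurable, funext hZdist]
  calc ∫ ω, g (fun i => Z i ω) ∂P = ∫ z, g z ∂P.map (fun ω i => Z i ω) :=
        (integral_map hZvec.aemeasurable (by fun_prop)).symm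
    _ = 0 := by rw [hlaw]; exact integral_eq_zero_of_odd _ hg_odd

/-- the Gaussian copula has zero standardized rank coskewness: for any
centered trivariate Gaussian vector with unit variances `Hᵢ = Σₖ aᵢₖ Zₖ`,
`E[(Φ(H₁)−1/2)(Φ(H₂)−1/2)(Φ(H₃)−1/2)] = 0`, regardless of the correlations. -/
theorem stmt15 {Ω : Type} [MeasurableSpace Ω] (P : Measure Ω) [IsProbabilityMeasure P]
    (Z : Fin 3 → Ω → ℝ)
    (hZmeas : ∀ i, Measurable (Z i))
    (hZindep : iIndepFun Z P)
    (hZdist : ∀ i, P.map (Z i) = gaussianReal 0 1)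
    (a : Fin 3 → Fin 3 → ℝ) (hnorm : ∀ i, ∑ k, (a i k)^2 = 1) :
    ∫ ω, (stdNormalCDF (∑ k, a 0 k * Z k ω) - 1/2)
        * (stdNormalCDF (∑ k, a 1 k * Z k ω) - 1/2)
        * (stdNormalCDF (∑ k, a 2 k * Z k ω) - 1/2) ∂P = 0 :=
  stmt15_general P Z hZmeas hZindep hZdist a
end
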